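/- arXiv:math/0701603 — 2 statements merged into one kernel-verified Lean document; each statement's English description precedes it below -/
import Mathlib

section
/- There exist a constant C > 0 and an n₀ such that for every n ≥ n₀, every starting point (ω₀,x₀) ∈ 𝓛(K_n), every real c ≥ 0 and every integer k ≥ (n/2)(log n + c): ‖𝓜_X^k(δ_{ω₀}⊗δ_{x₀}) − (2^n·n)^{−1}·1_{𝓛(K_n)}‖_TV² ≤ C·e^{−c}. -/
open Finset

noncomputable section

/-- `δ_x ∈ {0,1}^X`, the indicator lamp configuration of the vertex `x`. -/
def lampDelta {n : ℕ} (x : Fin n) : Fin n → ZMod 2 := fun z => if z = x then 1 else 0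

/-- The Markov operator of the simple random walk on the vertex lamplighter graph
`𝓛(K_n)` over the complete graph `K_n` (from `(ω,x)`: choose a uniform neighbour
`y ≠ x` and randomize the lamps at `x` and `y` independently and uniformly, i.e. each
of the `4(n−1)` moves has probability `1/(4(n−1))`). -/
def knLampM (n : ℕ) (F : (Fin n → ZMod 2) × Fin n → ℂ) :
    (Fin n → ZMod 2) × Fin n → ℂ :=
  fun p =>
    (1 / (4 * ((n : ℂ) - 1))) *
      ∑ y ∈ univ.filter (fun y => y ≠ p.2),
        (F (p.1, y) + F (p.1 + lampDelta p.2, y) + F (p.1 + lampDelta y, y) +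
          F (p.1 + lampDelta p.2 + lampDelta y, y))

namespace KLL

variable {n : ℕ}

/-! ### Characters of the lamp group -/

def sgn (a : ZMod 2) : ℝ := if a = 0 then 1 else -1

lemma sgn_add_one (a : ZMod 2) : sgn (a + 1) = - sgn a := by
  rcases (show a = 0 ∨ a = 1 by revert a; decide) with rfl | rfl <;>
    simp [sgn, show (1+1:ZMod 2)=0 by decide, show (1:ZMod 2) ≠ 0 by decide]

lemma sgn_sq (a : ZMod 2) : sgn a * sgn a = 1 := by
  rcases (show a = 0 ∨ a = 1 by revert a; decide) with rfl | rfl <;>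
    simp [sgn, show (1+1:ZMod 2)=0 by decide, show (1:ZMod 2) ≠ 0 by decide]

lemma sgn_abs (a : ZMod 2) : |sgn a| = 1 := by
  rcases (show a = 0 ∨ a = 1 by revert a; decide) with rfl | rfl <;>
    simp [sgn, show (1+1:ZMod 2)=0 by decide, show (1:ZMod 2) ≠ 0 by decide]

def chi (S : Finset (Fin n)) (ω : Fin n → ZMod 2) : ℝ := ∏ z ∈ S, sgn (ω z)

lemma chi_abs (S : Finset (Fin n)) (ω : Fin n → ZMod 2) : |chi S ω| = 1 := by
  rw [chi, Finset.abs_prod]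
  simp [sgn_abs]

lemma chi_add_delta (S : Finset (Fin n)) (ω : Fin n → ZMod 2) (y : Fin n) :
    chi S (ω + lampDelta y) = (if y ∈ S then -1 else 1) * chi S ω := by
  by_cases hy : y ∈ S
  · simp only [hy, if_true, chi]
    rw [← Finset.mul_prod_erase S _ hy, ← Finset.mul_prod_erase S (fun z => sgn (ω z)) hy]
    have h1 : ∀ z ∈ S.erase y, sgn ((ω + lampDelta y) z) = sgn (ω z) := by
      intro z hz
      have : z ≠ y := Finset.ne_of_mem_erase hz
      simp [lampDelta, Pi.add_apply, this]
    rw [Finset.prod_congr rfl h1]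
    have : (ω + lampDelta y) y = ω y + 1 := by simp [lampDelta, Pi.add_apply]
    rw [this, sgn_add_one]; ring
  · simp only [hy, if_false, one_mul, chi]
    refine Finset.prod_congr rfl fun z hz => ?_
    have : z ≠ y := fun h => hy (h ▸ hz)
    simp [lampDelta, Pi.add_apply, this]

lemma lampDelta_add_self (y : Fin n) : lampDelta y + lampDelta y = 0 := by
  funext z; simp [lampDelta]; split <;> decide

lemma card_pi : Fintype.card (Fin n → ZMod 2) = 2 ^ n := by
  simp [Fintype.card_fun]

lemma sum_chi_mul (S T : Finset (Fin n)) :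
    ∑ ω : Fin n → ZMod 2, chi S ω * chi T ω = if S = T then (2:ℝ)^n else 0 := by
  by_cases h : S = T
  · subst h
    have : ∀ ω : Fin n → ZMod 2, chi S ω * chi S ω = 1 := by
      intro ω
      rw [chi, ← Finset.prod_mul_distrib]
      exact Finset.prod_eq_one fun z _ => sgn_sq _
    simp only [this, Finset.sum_const, nsmul_eq_mul, mul_one, if_true]
    rw [Finset.card_univ, card_pi]; push_cast; ring
  · simp only [h, if_false]
    have : ∃ z₀, (z₀ ∈ S ∧ z₀ ∉ T) ∨ (z₀ ∈ T ∧ z₀ ∉ S) := by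
      by_contra hc
      push_neg at hc
      exact h (Finset.ext fun a => by
        have := hc a
        tauto)
    obtain ⟨z₀, hz⟩ := this
    have hinv : Function.Involutive (fun ω : Fin n → ZMod 2 => ω + lampDelta z₀) := by
      intro ω; simp [add_assoc, lampDelta_add_self]
    have hbij := hinv.bijective
    have key : ∑ ω : Fin n → ZMod 2, chi S ω * chi T ω
        = ∑ ω : Fin n → ZMod 2, chi S (ω + lampDelta z₀) * chi T (ω + lampDelta z₀) :=
      (Function.Bijective.sum_comp hbij _).symm
    have neg : ∀ ω : Fin n → ZMod 2,
        chi S (ω + lampDelta z₀) * chi T (ω + lampDelta z₀) = -(chi S ω * chi T ω) := by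
      intro ω
      rw [chi_add_delta, chi_add_delta]
      rcases hz with ⟨h1, h2⟩ | ⟨h1, h2⟩ <;> simp [h1, h2] <;> ring
    have h0 : ∑ ω : Fin n → ZMod 2, chi S ω * chi T ω
        = -∑ ω : Fin n → ZMod 2, chi S ω * chi T ω := by
      nth_rewrite 1 [key]; simp only [neg, Finset.sum_neg_distrib]
    linarith [h0]

lemma sum_chi (θ : Fin n → ZMod 2) :
    ∑ S : Finset (Fin n), chi S θ = if θ = 0 then (2:ℝ)^n else 0 := by
  have hexp : ∏ z : Fin n, (sgn (θ z) + 1) = ∑ S : Finset (Fin n), chi S θ := by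
    rw [Finset.prod_add]
    rw [Finset.powerset_univ]
    refine Finset.sum_congr rfl fun t _ => ?_
    simp [chi]
  by_cases h : θ = 0
  · subst h
    simp only [if_true]
    rw [← hexp]
    simp [sgn]
    norm_num
  · simp only [h, if_false]
    rw [← hexp]
    obtain ⟨z, hz⟩ : ∃ z, θ z ≠ 0 := by
      by_contra hc; push_neg at hc; exact h (funext hc)
    exact Finset.prod_eq_zero (Finset.mem_univ z) (by simp [sgn, hz])

lemma plancherel (𝒮 : Finset (Finset (Fin n))) (a : Finset (Fin n) → ℝ)
    (ω₀ : Fin n → ZMod 2) :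
    ∑ ω : Fin n → ZMod 2, (∑ S ∈ 𝒮, chi S (ω + ω₀) * a S)^2
      = 2^n * ∑ S ∈ 𝒮, (a S)^2 := by
  have reindex : ∑ ω : Fin n → ZMod 2, (∑ S ∈ 𝒮, chi S (ω + ω₀) * a S)^2
      = ∑ ω : Fin n → ZMod 2, (∑ S ∈ 𝒮, chi S ω * a S)^2 :=
    Equiv.sum_comp (Equiv.addRight ω₀) (fun ω => (∑ S ∈ 𝒮, chi S ω * a S)^2)
  rw [reindex]
  have expand : ∀ ω : Fin n → ZMod 2, (∑ S ∈ 𝒮, chi S ω * a S)^2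
      = ∑ S ∈ 𝒮, ∑ T ∈ 𝒮, (chi S ω * chi T ω) * (a S * a T) := by
    intro ω
    rw [sq, Finset.sum_mul_sum]
    exact Finset.sum_congr rfl fun S _ => Finset.sum_congr rfl fun T _ => by ring
  simp only [expand]
  rw [Finset.sum_comm]
  rw [Finset.mul_sum]
  refine Finset.sum_congr rfl fun S hS => ?_
  rw [Finset.sum_comm]
  have inner : ∀ T ∈ 𝒮, ∑ ω : Fin n → ZMod 2, chi S ω * chi T ω * (a S * a T)
      = if S = T then 2^n * (a S * a T) else 0 := by
    intro T _
    rw [← Finset.sum_mul, sum_chi_mul]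
    split <;> ring
  rw [Finset.sum_congr rfl inner, Finset.sum_ite_eq 𝒮 S (fun T => 2^n * (a S * a T))]
  simp [hS]
  ring

/-! ### The real Markov operator and its spectral data -/

def MR (n : ℕ) (F : (Fin n → ZMod 2) × Fin n → ℝ) :
    (Fin n → ZMod 2) × Fin n → ℝ :=
  fun p =>
    (1 / (4 * ((n : ℝ) - 1))) *
      ∑ y ∈ univ.filter (fun y => y ≠ p.2),
        (F (p.1, y) + F (p.1 + lampDelta p.2, y) + F (p.1 + lampDelta y, y) +
          F (p.1 + lampDelta p.2 + lampDelta y, y))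

lemma knLampM_cast (F : (Fin n → ZMod 2) × Fin n → ℝ) :
    knLampM n (fun p => ((F p : ℝ) : ℂ)) = fun p => ((MR n F p : ℝ) : ℂ) := by
  funext p
  simp only [knLampM, MR]
  push_cast
  ring

lemma knLampM_iterate_cast (F : (Fin n → ZMod 2) × Fin n → ℝ) (k : ℕ) :
    (knLampM n)^[k] (fun p => ((F p : ℝ) : ℂ)) = fun p => (((MR n)^[k] F p : ℝ) : ℂ) := by
  induction k generalizing F with
  | zero => simp
  | succ k ih =>
    rw [Function.iterate_succ_apply, Function.iterate_succ_apply, knLampM_cast, ih]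

lemma MR_sum {ι : Type*} (𝒮 : Finset ι) (H : ι → (Fin n → ZMod 2) × Fin n → ℝ) :
    MR n (fun p => ∑ S ∈ 𝒮, H S p) = fun p => ∑ S ∈ 𝒮, MR n (H S) p := by
  funext p
  simp only [MR, Finset.mul_sum]
  rw [Finset.sum_comm]
  congr 1
  funext y
  rw [← Finset.mul_sum]
  congr 1
  rw [← Finset.sum_add_distrib, ← Finset.sum_add_distrib, ← Finset.sum_add_distrib]

lemma MR_smul (c : ℝ) (F : (Fin n → ZMod 2) × Fin n → ℝ) :
    MR n (fun p => c * F p) = fun p => c * MR n F p := by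
  funext p
  simp only [MR, Finset.mul_sum]
  refine Finset.sum_congr rfl fun y _ => by ring

def mS (n : ℕ) (S : Finset (Fin n)) : ℝ := (n : ℝ) - S.card
def muS (n : ℕ) (S : Finset (Fin n)) : ℝ := ((n : ℝ) - 1 - S.card) / ((n:ℝ) - 1)
def nuS (n : ℕ) : ℝ := -1 / ((n:ℝ) - 1)

def dcoef (n : ℕ) (x₀ : Fin n) (k : ℕ) (S : Finset (Fin n)) (x : Fin n) : ℝ :=
  if x₀ ∈ S ∨ x ∈ S then 0 else
    muS n S ^ k / mS n S + nuS n ^ k * ((if x = x₀ then 1 else 0) - 1 / mS n S)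

def Bg (n : ℕ) (S : Finset (Fin n)) (g : Fin n → ℝ) (x : Fin n) : ℝ :=
  if x ∈ S then 0 else
    (1 / ((n:ℝ) - 1)) * ∑ y ∈ univ.filter (fun y => y ∉ S ∧ y ≠ x), g y

lemma intertwine (hn : 2 ≤ n) (S : Finset (Fin n)) (ω₀ : Fin n → ZMod 2) (g : Fin n → ℝ) :
    MR n (fun p => chi S (p.1 + ω₀) * g p.2)
      = fun p => chi S (p.1 + ω₀) * Bg n S g p.2 := by
  have hne : (n:ℝ) - 1 ≠ 0 := by
    have : (2:ℝ) ≤ n := by exact_mod_cast hn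
    linarith
  funext p
  obtain ⟨ω, x⟩ := p
  simp only [MR, Bg]
  have key : ∀ y : Fin n,
      chi S (ω + ω₀) * g y + chi S (ω + lampDelta x + ω₀) * g y
        + chi S (ω + lampDelta y + ω₀) * g y + chi S (ω + lampDelta x + lampDelta y + ω₀) * g y
      = (1 + (if x ∈ S then (-1:ℝ) else 1)) * (1 + (if y ∈ S then (-1:ℝ) else 1))
          * (chi S (ω + ω₀) * g y) := by
    intro y
    have e1 : ω + lampDelta x + ω₀ = (ω + ω₀) + lampDelta x := by ring
    have e2 : ω + lampDelta y + ω₀ = (ω + ω₀) + lampDelta y := by ring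
    have e3 : ω + lampDelta x + lampDelta y + ω₀ = ((ω + ω₀) + lampDelta x) + lampDelta y := by
      ring
    rw [e1, e2, e3, chi_add_delta, chi_add_delta, chi_add_delta, chi_add_delta]
    ring
  simp only [key]
  by_cases hx : x ∈ S
  · simp only [hx, if_true]
    norm_num
  · simp only [hx, if_false]
    have split : ∀ y : Fin n,
        (1 + (1:ℝ)) * (1 + (if y ∈ S then (-1:ℝ) else 1)) * (chi S (ω + ω₀) * g y)
        = if y ∈ S then 0 else 4 * (chi S (ω + ω₀) * g y) := by
      intro y; split <;> ring
    simp only [split]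
    rw [Finset.sum_ite, Finset.sum_const_zero, zero_add]
    have hfilter : (univ.filter (fun y => y ≠ x)).filter (fun y => ¬ y ∈ S)
        = univ.filter (fun y => y ∉ S ∧ y ≠ x) := by
      ext y; simp; tauto
    rw [hfilter]
    have pull : ∑ y ∈ univ.filter (fun y => y ∉ S ∧ y ≠ x), 4 * (chi S (ω + ω₀) * g y)
        = (4 * chi S (ω + ω₀)) * ∑ y ∈ univ.filter (fun y => y ∉ S ∧ y ≠ x), g y := by
      rw [Finset.mul_sum]
      exact Finset.sum_congr rfl fun y _ => by ring
    rw [pull]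
    field_simp

lemma card_filter_not_mem_ne (S : Finset (Fin n)) (x : Fin n) (hx : x ∉ S) :
    (univ.filter (fun y => y ∉ S ∧ y ≠ x)).card = n - S.card - 1 := by
  have : univ.filter (fun y => y ∉ S ∧ y ≠ x) = (Sᶜ).erase x := by
    ext y; simp [Finset.mem_erase, and_comm]
  rw [this, Finset.card_erase_of_mem (by simpa using hx), Finset.card_compl]
  simp

lemma card_le_of_not_mem (S : Finset (Fin n)) (x : Fin n) (hx : x ∉ S) :
    S.card + 1 ≤ n := by
  have hsub : S ⊆ univ.erase x := fun z hz =>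
    Finset.mem_erase.mpr ⟨fun h => hx (h ▸ hz), Finset.mem_univ z⟩
  have := Finset.card_le_card hsub
  rw [Finset.card_erase_of_mem (Finset.mem_univ x), Finset.card_univ, Fintype.card_fin] at this
  have hp : 0 < n := x.pos
  omega

lemma Bg_dcoef (hn : 2 ≤ n) (x₀ : Fin n) (k : ℕ) (S : Finset (Fin n)) :
    Bg n S (fun y => dcoef n x₀ k S y) = dcoef n x₀ (k+1) S := by
  have hn1 : (1:ℝ) ≤ (n:ℝ) - 1 := by
    have : (2:ℝ) ≤ n := by exact_mod_cast hn
    linarith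
  have hne : (n:ℝ) - 1 ≠ 0 := by linarith
  funext x
  by_cases hx : x ∈ S
  · simp [Bg, dcoef, hx]
  by_cases hx₀ : x₀ ∈ S
  · have hz : ∀ y, dcoef n x₀ k S y = 0 := by
      intro y; simp [dcoef, hx₀]
    simp [Bg, dcoef, hx, hx₀, hz]
  have hcard := card_le_of_not_mem S x hx
  have hm1 : (1:ℝ) ≤ mS n S := by
    rw [mS]
    have : (S.card : ℝ) + 1 ≤ n := by exact_mod_cast hcard
    linarith
  have hmne : mS n S ≠ 0 := by linarith
  have hval : ∀ y ∈ univ.filter (fun y => y ∉ S ∧ y ≠ x),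
      dcoef n x₀ k S y
        = muS n S ^ k / mS n S + nuS n ^ k * ((if y = x₀ then 1 else 0) - 1 / mS n S) := by
    intro y hy
    simp only [Finset.mem_filter] at hy
    simp [dcoef, hx₀, hy.2.1]
  have hcast : ((univ.filter (fun y => y ∉ S ∧ y ≠ x)).card : ℝ) = mS n S - 1 := by
    rw [card_filter_not_mem_ne S x hx, mS]
    have h1 : (1:ℕ) ≤ n - S.card := by omega
    push_cast [Nat.cast_sub (by omega : S.card ≤ n), Nat.cast_sub h1]
    ring
  have hind : ∑ y ∈ univ.filter (fun y => y ∉ S ∧ y ≠ x), (if y = x₀ then (1:ℝ) else 0)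
      = if x = x₀ then 0 else 1 := by
    rw [Finset.sum_ite_eq' (univ.filter (fun y => y ∉ S ∧ y ≠ x)) x₀ (fun _ => (1:ℝ))]
    by_cases hxx : x = x₀
    · simp [hxx]
    · have : x₀ ∈ univ.filter (fun y => y ∉ S ∧ y ≠ x) := by
        simp [hx₀]
        exact fun h => hxx h.symm
      simp [this, hxx]
  have hsum : ∑ y ∈ univ.filter (fun y => y ∉ S ∧ y ≠ x), dcoef n x₀ k S y
      = (mS n S - 1) * (muS n S ^ k / mS n S)
        + nuS n ^ k * ((if x = x₀ then 0 else 1) - (mS n S - 1) / mS n S) := by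
    rw [Finset.sum_congr rfl hval, Finset.sum_add_distrib, Finset.sum_const, nsmul_eq_mul, hcast]
    congr 1
    rw [← Finset.mul_sum]
    congr 1
    rw [Finset.sum_sub_distrib, hind, Finset.sum_const, nsmul_eq_mul, hcast]
    ring
  have hBg : Bg n S (fun y => dcoef n x₀ k S y) x
      = (1 / ((n:ℝ) - 1)) * ∑ y ∈ univ.filter (fun y => y ∉ S ∧ y ≠ x), dcoef n x₀ k S y := by
    simp [Bg, hx]
  rw [hBg, hsum]
  simp only [dcoef, hx, hx₀, if_false, false_or, or_self]
  have hmu : muS n S * ((n:ℝ) - 1) = mS n S - 1 := by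
    rw [muS, mS]; field_simp; ring
  have hnu : nuS n * ((n:ℝ) - 1) = -1 := by
    rw [nuS]; field_simp
  rw [pow_succ, pow_succ]
  by_cases hxx : x = x₀
  · simp only [hxx, if_true]
    field_simp
    linear_combination (-(muS n S ^ k)) * hmu
      + (-(nuS n ^ k * (mS n S - 1))) * hnu
  · simp only [hxx, if_false]
    field_simp
    linear_combination (-(muS n S ^ k)) * hmu + (nuS n ^ k) * hnu

lemma Bg_delta (hn : 2 ≤ n) (x₀ : Fin n) (S : Finset (Fin n)) :
    Bg n S (fun y => if y = x₀ then 1 else 0) = dcoef n x₀ 1 S := by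
  have hn1 : (1:ℝ) ≤ (n:ℝ) - 1 := by
    have : (2:ℝ) ≤ n := by exact_mod_cast hn
    linarith
  have hne : (n:ℝ) - 1 ≠ 0 := by linarith
  funext x
  by_cases hx : x ∈ S
  · simp [Bg, dcoef, hx]
  have hsum : ∑ y ∈ univ.filter (fun y => y ∉ S ∧ y ≠ x), (if y = x₀ then (1:ℝ) else 0)
      = if x₀ ∉ S ∧ x₀ ≠ x then 1 else 0 := by
    rw [Finset.sum_ite_eq' (univ.filter (fun y => y ∉ S ∧ y ≠ x)) x₀ (fun _ => (1:ℝ))]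
    by_cases h : x₀ ∉ S ∧ x₀ ≠ x
    · simp [h.1, h.2]
    · have : x₀ ∉ univ.filter (fun y => y ∉ S ∧ y ≠ x) := by
        simp only [Finset.mem_filter, Finset.mem_univ, true_and]
        tauto
      simp [this, h]
  simp only [Bg, hx, if_false]
  rw [hsum]
  by_cases hx₀ : x₀ ∈ S
  · have : ¬ (x₀ ∉ S ∧ x₀ ≠ x) := by tauto
    simp [this, dcoef, hx₀]
  have hcard := card_le_of_not_mem S x hx
  have hm1 : (1:ℝ) ≤ mS n S := by
    rw [mS]
    have : (S.card : ℝ) + 1 ≤ n := by exact_mod_cast hcard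
    linarith
  have hmne : mS n S ≠ 0 := by linarith
  have hmu' : muS n S = (mS n S - 1) / ((n:ℝ) - 1) := by
    rw [muS, mS]; ring_nf
  simp only [dcoef, hx₀, hx, false_or, or_self, if_false]
  rw [hmu', nuS]
  by_cases hxx : x = x₀
  · have h1 : ¬ (x₀ ∉ S ∧ x₀ ≠ x) := by simp [hxx.symm]
    simp only [h1, if_false, hxx, if_true, pow_one]
    field_simp
    simp
  · have h1 : (x₀ ∉ S ∧ x₀ ≠ x) := ⟨hx₀, fun h => hxx h.symm⟩
    simp only [h1, if_true, hxx, if_false, pow_one]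
    field_simp
    rw [if_pos ⟨not_false, h1.2⟩]
    ring

/-! ### The iterate formula -/

lemma expand_delta (ω₀ : Fin n → ZMod 2) (x₀ : Fin n) :
    (fun q : (Fin n → ZMod 2) × Fin n => if q = (ω₀, x₀) then (1:ℝ) else 0)
      = fun p => (2^n:ℝ)⁻¹ * ∑ S : Finset (Fin n),
          chi S (p.1 + ω₀) * (if p.2 = x₀ then 1 else 0) := by
  funext p
  obtain ⟨ω, x⟩ := p
  have hsum : ∑ S : Finset (Fin n), chi S (ω + ω₀) * (if x = x₀ then (1:ℝ) else 0)
      = (if ω + ω₀ = 0 then (2:ℝ)^n else 0) * (if x = x₀ then 1 else 0) := by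
    rw [← Finset.sum_mul, sum_chi]
  simp only [hsum]
  have hω : (ω + ω₀ = 0) ↔ ω = ω₀ := by
    constructor
    · intro h
      funext z
      have := congrFun h z
      simp only [Pi.add_apply, Pi.zero_apply] at this
      have h2 : ω z + ω₀ z + ω₀ z = ω₀ z := by rw [this]; ring
      rwa [add_assoc, CharTwo.add_self_eq_zero, add_zero] at h2
    · intro h; subst h; funext z; simp [CharTwo.add_self_eq_zero]
  have hq : ((ω, x) = (ω₀, x₀)) ↔ (ω = ω₀ ∧ x = x₀) := Prod.ext_iff
  have hself : ω₀ + ω₀ = 0 := by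
    funext z
    have : ∀ a : ZMod 2, a + a = 0 := by decide
    simp [this]
  by_cases h1 : ω = ω₀ <;> by_cases h2 : x = x₀ <;>
    simp [hq, h1, h2, hω, hself]

def Ffun (n : ℕ) (ω₀ : Fin n → ZMod 2) (x₀ : Fin n) (k : ℕ) :
    (Fin n → ZMod 2) × Fin n → ℝ :=
  fun p => (2^n:ℝ)⁻¹ * ∑ S : Finset (Fin n), chi S (p.1 + ω₀) * dcoef n x₀ k S p.2

lemma iterate_formula (hn : 2 ≤ n) (ω₀ : Fin n → ZMod 2) (x₀ : Fin n) (k : ℕ) (hk : 1 ≤ k) :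
    (MR n)^[k] (fun q => if q = (ω₀, x₀) then (1:ℝ) else 0) = Ffun n ω₀ x₀ k := by
  obtain ⟨m, rfl⟩ : ∃ m, k = m + 1 := ⟨k - 1, by omega⟩
  clear hk
  induction m with
  | zero =>
    rw [Function.iterate_one, expand_delta ω₀ x₀, MR_smul, MR_sum]
    funext p
    simp only [Ffun]
    congr 1
    refine Finset.sum_congr rfl fun S _ => ?_
    rw [intertwine hn S ω₀ (fun y => if y = x₀ then 1 else 0), Bg_delta hn]
  | succ m ih =>
    rw [Function.iterate_succ_apply', ih]
    show MR n (fun p => (2^n:ℝ)⁻¹ * ∑ S : Finset (Fin n),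
        chi S (p.1 + ω₀) * dcoef n x₀ (m+1) S p.2) = _
    rw [MR_smul, MR_sum]
    funext p
    simp only [Ffun]
    congr 1
    refine Finset.sum_congr rfl fun S _ => ?_
    rw [intertwine hn S ω₀ (fun y => dcoef n x₀ (m+1) S y), Bg_dcoef hn]

/-! ### The L¹ bound -/

def aA (n : ℕ) (x₀ : Fin n) (k : ℕ) (S : Finset (Fin n)) : ℝ :=
  if x₀ ∈ S then 0 else muS n S ^ k / mS n S

def QA (n : ℕ) (x₀ : Fin n) (k : ℕ) : ℝ :=
  ∑ S ∈ (univ : Finset (Finset (Fin n))).erase ∅, (aA n x₀ k S)^2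

lemma l1_le_sqrt {ι : Type*} [Fintype ι] (f : ι → ℝ) :
    ∑ i : ι, |f i| ≤ Real.sqrt (Fintype.card ι) * Real.sqrt (∑ i : ι, (f i)^2) := by
  have h := Finset.sum_mul_sq_le_sq_mul_sq univ (fun _ : ι => (1:ℝ)) (fun i => |f i|)
  simp only [one_mul, one_pow, Finset.sum_const, Finset.card_univ, nsmul_eq_mul, mul_one,
    sq_abs] at h
  have h0 : 0 ≤ ∑ i : ι, |f i| := Finset.sum_nonneg fun i _ => abs_nonneg _
  have := Real.sqrt_le_sqrt h
  rw [Real.sqrt_sq h0, Real.sqrt_mul (by positivity)] at this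
  exact this

lemma sqrt_card_pi : Real.sqrt (Fintype.card (Fin n → ZMod 2)) = Real.sqrt (2^n) := by
  congr 1
  simp [Fintype.card_fun]
lemma l1_bound (hn : 16 ≤ n) (ω₀ : Fin n → ZMod 2) (x₀ : Fin n) (k : ℕ) :
    ∑ p : (Fin n → ZMod 2) × Fin n, |Ffun n ω₀ x₀ k p - 1/(2^n * n)|
      ≤ 2 * n * Real.sqrt (QA n x₀ k)
        + 2^n * n * (2^n * (((n:ℝ)-1)⁻¹)^k) :=
  by
  have hn2 : (2:ℝ) ≤ n := by
    have : (16:ℝ) ≤ n := by exact_mod_cast hn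
    linarith
  set bB : Finset (Fin n) → Fin n → ℝ :=
    fun S x => if x ∈ S then -(aA n x₀ k S) else 0 with hbB
  set rR : Finset (Fin n) → Fin n → ℝ :=
    fun S x => if x₀ ∈ S ∨ x ∈ S then 0
      else nuS n ^ k * ((if x = x₀ then 1 else 0) - 1 / mS n S) with hrR
  set gA : (Fin n → ZMod 2) → ℝ :=
    fun ω => ∑ S ∈ (univ : Finset (Finset (Fin n))).erase ∅, chi S (ω + ω₀) * aA n x₀ k S
    with hgA
  set gB : (Fin n → ZMod 2) × Fin n → ℝ :=
    fun p => ∑ S : Finset (Fin n), chi S (p.1 + ω₀) * bB S p.2 with hgB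
  set gR : (Fin n → ZMod 2) × Fin n → ℝ :=
    fun p => ∑ S : Finset (Fin n), chi S (p.1 + ω₀) * rR S p.2 with hgR
  -- pointwise decomposition
  have hdecomp : ∀ S x, dcoef n x₀ k S x = aA n x₀ k S + bB S x + rR S x := by
    intro S x
    by_cases h0 : x₀ ∈ S
    · simp [dcoef, aA, hbB, hrR, h0]
    by_cases h1 : x ∈ S
    · simp [dcoef, aA, hbB, hrR, h0, h1]
    · simp [dcoef, aA, hbB, hrR, h0, h1]
  have hAempty : aA n x₀ k (∅ : Finset (Fin n)) = 1 / n := by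
    simp only [aA, Finset.notMem_empty, if_false]
    rw [muS, mS]
    simp
    rw [div_self (by linarith : (n:ℝ) - 1 ≠ 0)]
    simp
  have hu : ∀ p : (Fin n → ZMod 2) × Fin n,
      Ffun n ω₀ x₀ k p - 1/(2^n * n) = (2^n:ℝ)⁻¹ * (gA p.1 + gB p + gR p) := by
    intro p
    rw [Ffun]
    have hsplit : ∑ S : Finset (Fin n), chi S (p.1 + ω₀) * dcoef n x₀ k S p.2
        = (∑ S : Finset (Fin n), chi S (p.1 + ω₀) * aA n x₀ k S) + gB p + gR p := by
      rw [hgB, hgR]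
      rw [← Finset.sum_add_distrib, ← Finset.sum_add_distrib]
      refine Finset.sum_congr rfl fun S _ => ?_
      rw [hdecomp]
      ring
    rw [hsplit]
    have hchi0 : chi (∅ : Finset (Fin n)) (p.1 + ω₀) = 1 := by simp [chi]
    have hA : ∑ S : Finset (Fin n), chi S (p.1 + ω₀) * aA n x₀ k S
        = gA p.1 + 1/n := by
      rw [hgA]
      rw [← Finset.add_sum_erase (univ : Finset (Finset (Fin n)))
        (fun S => chi S (p.1 + ω₀) * aA n x₀ k S) (Finset.mem_univ ∅)]
      simp only [hchi0, hAempty, one_mul]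
      ring
    rw [hA]
    have h2n : (0:ℝ) < 2^n := by positivity
    field_simp
    ring
  -- sum the pointwise bound
  have habs : ∀ p : (Fin n → ZMod 2) × Fin n,
      |Ffun n ω₀ x₀ k p - 1/(2^n * n)|
        ≤ (2^n:ℝ)⁻¹ * (|gA p.1| + |gB p| + |gR p|) := by
    intro p
    rw [hu p, abs_mul, abs_of_nonneg (by positivity : (0:ℝ) ≤ ((2:ℝ)^n)⁻¹)]
    gcongr
    exact (abs_add_three _ _ _)
  refine le_trans (Finset.sum_le_sum fun p _ => habs p) ?_
  rw [← Finset.mul_sum]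
  have hsplit3 : ∑ p : (Fin n → ZMod 2) × Fin n, (|gA p.1| + |gB p| + |gR p|)
      = (∑ p : (Fin n → ZMod 2) × Fin n, |gA p.1|)
        + (∑ p : (Fin n → ZMod 2) × Fin n, |gB p|)
        + (∑ p : (Fin n → ZMod 2) × Fin n, |gR p|) := by
    rw [← Finset.sum_add_distrib, ← Finset.sum_add_distrib]
  rw [hsplit3]
  -- preliminary : L¹–L² on the lamp space
  have l1l2 : ∀ g : (Fin n → ZMod 2) → ℝ,
      ∑ ω : Fin n → ZMod 2, |g ω|
        ≤ Real.sqrt (2^n) * Real.sqrt (∑ ω : Fin n → ZMod 2, (g ω)^2) := by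
    intro g
    have := l1_le_sqrt g
    rwa [sqrt_card_pi] at this
  have sqrt2n : Real.sqrt ((2:ℝ)^n) * Real.sqrt ((2:ℝ)^n) = (2:ℝ)^n :=
    Real.mul_self_sqrt (by positivity)
  have hQA0 : 0 ≤ QA n x₀ k :=
    Finset.sum_nonneg fun S _ => sq_nonneg _
  -- three bounds
  have boundA : ∑ p : (Fin n → ZMod 2) × Fin n, |gA p.1|
      ≤ (n:ℝ) * (2^n * Real.sqrt (QA n x₀ k)) := by
    rw [Fintype.sum_prod_type]
    have hx : ∀ ω : Fin n → ZMod 2, ∑ _x : Fin n, |gA ω| = (n:ℝ) * |gA ω| := by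
      intro ω; rw [Finset.sum_const]; simp [mul_comm]
    rw [Finset.sum_congr rfl fun ω _ => hx ω, ← Finset.mul_sum]
    have h2 : ∑ ω : Fin n → ZMod 2, (gA ω)^2 = 2^n * QA n x₀ k := by
      rw [hgA, QA]
      exact plancherel _ _ _
    have h1 : ∑ ω : Fin n → ZMod 2, |gA ω| ≤ 2^n * Real.sqrt (QA n x₀ k) := by
      refine le_trans (l1l2 gA) ?_
      rw [h2, Real.sqrt_mul (by positivity), ← mul_assoc, sqrt2n]
    have hn0 : (0:ℝ) ≤ n := by positivity
    exact mul_le_mul_of_nonneg_left h1 hn0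
  have boundB : ∑ p : (Fin n → ZMod 2) × Fin n, |gB p|
      ≤ (2:ℝ)^n * ((n:ℝ) * Real.sqrt (QA n x₀ k)) := by
    rw [Fintype.sum_prod_type, Finset.sum_comm]
    set QB : Fin n → ℝ := fun x => ∑ S : Finset (Fin n), (bB S x)^2 with hQB
    have hQB0 : ∀ x, 0 ≤ QB x := fun x => Finset.sum_nonneg fun S _ => sq_nonneg _
    have perx : ∀ x : Fin n, ∑ ω : Fin n → ZMod 2, |gB (ω, x)|
        ≤ 2^n * Real.sqrt (QB x) := by
      intro x
      have h2 : ∑ ω : Fin n → ZMod 2, (gB (ω, x))^2 = 2^n * QB x := by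
        rw [hgB, hQB]
        exact plancherel univ (fun S => bB S x) ω₀
      refine le_trans (l1l2 fun ω => gB (ω, x)) ?_
      rw [h2, Real.sqrt_mul (by positivity), ← mul_assoc, sqrt2n]
    refine le_trans (Finset.sum_le_sum fun x _ => perx x) ?_
    rw [← Finset.mul_sum]
    have hsum2 : ∑ x : Fin n, QB x ≤ (n:ℝ) * QA n x₀ k := by
      rw [hQB]
      rw [Finset.sum_comm]
      have inner : ∀ S : Finset (Fin n), ∑ x : Fin n, (bB S x)^2
          = (S.card : ℝ) * (aA n x₀ k S)^2 := by
        intro S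
        have hb2 : ∀ x, (bB S x)^2 = if x ∈ S then (aA n x₀ k S)^2 else 0 := by
          intro x
          rw [hbB]
          by_cases h : x ∈ S <;> simp [h]
        rw [Finset.sum_congr rfl fun x _ => hb2 x, Finset.sum_ite, Finset.sum_const_zero,
          add_zero, Finset.sum_const]
        have : univ.filter (fun x => x ∈ S) = S := by ext; simp
        rw [this]
        simp
      rw [Finset.sum_congr rfl fun S _ => inner S]
      have drop : ∑ S : Finset (Fin n), (S.card : ℝ) * (aA n x₀ k S)^2
          = ∑ S ∈ (univ : Finset (Finset (Fin n))).erase ∅,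
              (S.card : ℝ) * (aA n x₀ k S)^2 := by
        rw [← Finset.add_sum_erase (univ : Finset (Finset (Fin n)))
          (fun S => (S.card : ℝ) * (aA n x₀ k S)^2) (Finset.mem_univ ∅)]
        simp
      rw [drop, QA, Finset.mul_sum]
      refine Finset.sum_le_sum fun S _ => ?_
      have hcard : (S.card : ℝ) ≤ n := by
        have h := Finset.card_le_univ S
        simp only [Finset.card_univ, Fintype.card_fin] at h
        exact_mod_cast h
      nlinarith [sq_nonneg (aA n x₀ k S)]
    have hxsum : ∑ x : Fin n, Real.sqrt (QB x)
        ≤ (n:ℝ) * Real.sqrt (QA n x₀ k) := by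
      have h1 : ∑ x : Fin n, Real.sqrt (QB x) = ∑ x : Fin n, |Real.sqrt (QB x)| := by
        refine Finset.sum_congr rfl fun x _ => (abs_of_nonneg (Real.sqrt_nonneg _)).symm
      rw [h1]
      refine le_trans (l1_le_sqrt fun x => Real.sqrt (QB x)) ?_
      have h3 : ∑ x : Fin n, (Real.sqrt (QB x))^2 = ∑ x : Fin n, QB x := by
        refine Finset.sum_congr rfl fun x _ => Real.sq_sqrt (hQB0 x)
      rw [h3]
      have h4 : Real.sqrt (∑ x : Fin n, QB x) ≤ Real.sqrt ((n:ℝ) * QA n x₀ k) :=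
        Real.sqrt_le_sqrt hsum2
      have h5 : Real.sqrt (Fintype.card (Fin n)) = Real.sqrt (n:ℝ) := by
        rw [Fintype.card_fin]
      rw [h5]
      refine le_trans (mul_le_mul_of_nonneg_left h4 (Real.sqrt_nonneg _)) ?_
      rw [Real.sqrt_mul (by positivity), ← mul_assoc,
        Real.mul_self_sqrt (by positivity : (0:ℝ) ≤ (n:ℝ))]
    exact mul_le_mul_of_nonneg_left hxsum (by positivity)
  have boundR : ∑ p : (Fin n → ZMod 2) × Fin n, |gR p|
      ≤ (2^n * n) * (2^n * (((n:ℝ)-1)⁻¹)^k) := by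
    have hrRb : ∀ S x, |rR S x| ≤ (((n:ℝ)-1)⁻¹)^k := by
      intro S x
      rw [hrR]
      by_cases h : x₀ ∈ S ∨ x ∈ S
      · simp only [h, if_true]
        rw [abs_zero]
        exact pow_nonneg (inv_nonneg.mpr (by linarith)) k
      · simp only [h, if_false]
        push_neg at h
        have hm1 : (1:ℝ) ≤ mS n S := by
          have := card_le_of_not_mem S x h.2
          rw [mS]
          have : ((S.card:ℝ)) + 1 ≤ n := by exact_mod_cast this
          linarith
        have habs1 : |(if x = x₀ then (1:ℝ) else 0) - 1 / mS n S| ≤ 1 := by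
          have hmpos : (0:ℝ) < mS n S := lt_of_lt_of_le one_pos hm1
          have hinv0 : (0:ℝ) < (mS n S)⁻¹ := inv_pos.mpr hmpos
          have hinv1 : (mS n S)⁻¹ ≤ 1 := by
            rw [inv_le_one_iff₀]
            right; linarith
          rw [abs_le]
          by_cases hxx : x = x₀ <;> simp [hxx, one_div] <;> constructor <;> linarith
        have hnu : |nuS n ^ k| = (((n:ℝ)-1)⁻¹)^k := by
          rw [abs_pow, nuS, abs_div, abs_neg, abs_one]
          congr 1
          rw [abs_of_pos (by linarith : (0:ℝ) < (n:ℝ)-1), one_div]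
        calc |nuS n ^ k * ((if x = x₀ then (1:ℝ) else 0) - 1 / mS n S)|
            = |nuS n ^ k| * |(if x = x₀ then (1:ℝ) else 0) - 1 / mS n S| := abs_mul _ _
          _ ≤ |nuS n ^ k| * 1 := by
              exact mul_le_mul_of_nonneg_left habs1 (abs_nonneg _)
          _ = (((n:ℝ)-1)⁻¹)^k := by rw [mul_one, hnu]
    have hgRb : ∀ p : (Fin n → ZMod 2) × Fin n, |gR p| ≤ 2^n * (((n:ℝ)-1)⁻¹)^k := by
      intro p
      rw [hgR]
      refine le_trans (Finset.abs_sum_le_sum_abs _ _) ?_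
      have : ∀ S : Finset (Fin n), |chi S (p.1 + ω₀) * rR S p.2| ≤ (((n:ℝ)-1)⁻¹)^k := by
        intro S
        rw [abs_mul, chi_abs, one_mul]
        exact hrRb S p.2
      refine le_trans (Finset.sum_le_sum fun S _ => this S) (le_of_eq ?_)
      rw [Finset.sum_const, Finset.card_univ, Fintype.card_finset, Fintype.card_fin,
        nsmul_eq_mul]
      push_cast
      ring
    refine le_trans (Finset.sum_le_sum fun p _ => hgRb p) (le_of_eq ?_)
    rw [Finset.sum_const, Finset.card_univ, Fintype.card_prod, Fintype.card_fun,
      Fintype.card_fin, nsmul_eq_mul]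
    have hc : Fintype.card (ZMod 2) = 2 := by simp
    rw [hc]
    push_cast
    ring
  -- combine
  have hfinal := add_le_add (add_le_add boundA boundB) boundR
  refine le_trans (mul_le_mul_of_nonneg_left hfinal (by positivity : (0:ℝ) ≤ ((2:ℝ)^n)⁻¹)) ?_
  have h2n : (0:ℝ) < 2^n := by positivity
  have h2n1 : (1:ℝ) ≤ 2^n := one_le_pow₀ (by norm_num)
  have hek : (0:ℝ) ≤ (((n:ℝ)-1)⁻¹)^k := pow_nonneg (inv_nonneg.mpr (by linarith)) k
  have hnn : (0:ℝ) ≤ (n:ℝ) := by positivity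
  rw [mul_add, mul_add]
  have e1 : ((2:ℝ)^n)⁻¹ * ((n:ℝ) * (2^n * Real.sqrt (QA n x₀ k)))
      = n * Real.sqrt (QA n x₀ k) := by field_simp
  have e2 : ((2:ℝ)^n)⁻¹ * ((2:ℝ)^n * ((n:ℝ) * Real.sqrt (QA n x₀ k)))
      = n * Real.sqrt (QA n x₀ k) := by field_simp
  have e3 : ((2:ℝ)^n)⁻¹ * ((2^n * (n:ℝ)) * (2^n * (((n:ℝ)-1)⁻¹)^k))
      = n * (2^n * (((n:ℝ)-1)⁻¹)^k) := by field_simp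
  rw [e1, e2, e3]
  nlinarith [mul_nonneg (mul_nonneg hnn h2n.le) hek]
lemma nat_sq_le : ∀ s : ℕ, 1 ≤ s → (s+1)^2 ≤ 4^s := by
  intro s hs
  induction s with
  | zero => omega
  | succ m ih =>
    by_cases hm : 1 ≤ m
    · have := ih hm
      have h4 : 4^(m+1) = 4 * 4^m := by ring
      nlinarith
    · interval_cases m <;> norm_num

lemma binom_sum (q : ℝ) :
    ∑ S : Finset (Fin n), q ^ S.card = (q + 1)^n := by
  have h := Finset.prod_add (fun _ : Fin n => q) (fun _ : Fin n => (1:ℝ)) univ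
  simp only [Finset.prod_const, one_pow, mul_one, Finset.card_univ,
    Fintype.card_fin, Finset.powerset_univ] at h
  exact h.symm

lemma exp4_lt : Real.exp 4 < 55 := by
  have h1 := Real.exp_one_lt_d9
  have h4 : Real.exp 4 = (Real.exp 1)^4 := by
    rw [← Real.exp_nat_mul]; norm_num
  rw [h4]
  have : (Real.exp 1)^4 < 2.7182818286^4 := by
    have h0 : 0 < Real.exp 1 := Real.exp_pos 1
    exact pow_lt_pow_left₀ h1 h0.le (by norm_num)
  nlinarith

lemma key1 (hn : 16 ≤ n) (x₀ : Fin n) (c : ℝ) (hc : 0 ≤ c) (k : ℕ)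
    (hk : ((n : ℝ) / 2) * (Real.log n + c) ≤ (k : ℝ)) :
    (n:ℝ)^2 * QA n x₀ k ≤ 54 * Real.exp (-c) := by
  have hnR : (16:ℝ) ≤ n := by exact_mod_cast hn
  have hn0 : (0:ℝ) < n := by linarith
  have hn1 : (1:ℝ) ≤ (n:ℝ) - 1 := by linarith
  have hL : (0:ℝ) ≤ Real.log n := Real.log_nonneg (by linarith)
  have hLc : (0:ℝ) ≤ Real.log n + c := by linarith
  have perS : ∀ S ∈ (univ : Finset (Finset (Fin n))).erase ∅,
      (n:ℝ)^2 * (aA n x₀ k S)^2 ≤ (4/(n:ℝ)) ^ S.card * Real.exp (-c) := by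
    intro S hS
    have hSne : S ≠ ∅ := (Finset.mem_erase.mp hS).1
    have hs1 : 1 ≤ S.card := Finset.card_pos.mpr (Finset.nonempty_of_ne_empty hSne)
    have hq0 : (0:ℝ) ≤ 4/(n:ℝ) := by positivity
    by_cases hx₀ : x₀ ∈ S
    · rw [aA, if_pos hx₀]
      have : (0:ℝ) ≤ (4/(n:ℝ)) ^ S.card * Real.exp (-c) := by positivity
      simpa using this
    rw [aA, if_neg hx₀]
    have hsn := card_le_of_not_mem S x₀ hx₀
    set s : ℕ := S.card with hsdef
    have hsR : (s:ℝ) + 1 ≤ n := by exact_mod_cast hsn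
    have hs1R : (1:ℝ) ≤ (s:ℝ) := by exact_mod_cast hs1
    have hm1 : (1:ℝ) ≤ mS n S := by rw [mS]; linarith
    have hm0 : (0:ℝ) < mS n S := by linarith
    have hi : (n:ℝ) ≤ mS n S * ((s:ℝ)+1) := by
      rw [mS]; nlinarith
    have hmu0 : (0:ℝ) ≤ muS n S := by
      rw [muS]
      apply div_nonneg _ (by linarith)
      linarith
    have hmu_le : muS n S ≤ Real.exp (-((s:ℝ)/((n:ℝ)-1))) := by
      have heq : muS n S = 1 - (s:ℝ)/((n:ℝ)-1) := by
        rw [muS]; field_simp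
        rw [hsdef]
      rw [heq]
      have := Real.add_one_le_exp (-((s:ℝ)/((n:ℝ)-1)))
      linarith
    have hmuk : muS n S ^ k ≤ Real.exp ((k:ℝ) * (-((s:ℝ)/((n:ℝ)-1)))) := by
      rw [Real.exp_nat_mul]
      exact pow_le_pow_left₀ hmu0 hmu_le k
    have hmuk0 : (0:ℝ) ≤ muS n S ^ k := pow_nonneg hmu0 k
    have h2k : (n:ℝ) * (Real.log n + c) ≤ 2*(k:ℝ) := by linarith
    have hdiv : (s:ℝ)*(Real.log n + c) ≤ 2*(k:ℝ)*(s:ℝ)/((n:ℝ)-1) := by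
      rw [le_div_iff₀ (by linarith : (0:ℝ) < (n:ℝ)-1)]
      nlinarith [mul_le_mul_of_nonneg_left h2k (by linarith : (0:ℝ) ≤ (s:ℝ)),
        mul_nonneg (by linarith : (0:ℝ) ≤ (s:ℝ)) hLc]
    have hexp2 : Real.exp ((k:ℝ) * (-((s:ℝ)/((n:ℝ)-1)))) ^ 2
        ≤ Real.exp (-((s:ℝ) * (Real.log n + c))) := by
      rw [← Real.exp_nat_mul]
      apply Real.exp_le_exp.mpr
      have hre : ((2:ℕ):ℝ) * ((k:ℝ) * (-((s:ℝ)/((n:ℝ)-1)))) = -(2*(k:ℝ)*(s:ℝ)/((n:ℝ)-1)) := by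
        push_cast; ring
      rw [hre]
      exact neg_le_neg hdiv
    have hiv : Real.exp (-((s:ℝ) * (Real.log n + c)))
        ≤ ((n:ℝ)^s)⁻¹ * Real.exp (-c) := by
      have hsplit : Real.exp (-((s:ℝ) * (Real.log n + c)))
          = Real.exp (-((s:ℝ) * Real.log n)) * Real.exp (-((s:ℝ)*c)) := by
        rw [← Real.exp_add]; ring_nf
      have h1 : Real.exp (-((s:ℝ) * Real.log n)) = ((n:ℝ)^s)⁻¹ := by
        rw [Real.exp_neg, Real.exp_nat_mul, Real.exp_log hn0]
      have h2 : Real.exp (-((s:ℝ)*c)) ≤ Real.exp (-c) := by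
        apply Real.exp_le_exp.mpr
        nlinarith
      rw [hsplit, h1]
      exact mul_le_mul_of_nonneg_left h2 (by positivity)
    have hA : (muS n S ^ k)^2 ≤ ((n:ℝ)^s)⁻¹ * Real.exp (-c) :=
      le_trans (le_trans (pow_le_pow_left₀ hmuk0 hmuk 2) hexp2) hiv
    have hnm : (n:ℝ)/mS n S ≤ (s:ℝ)+1 := by
      rw [div_le_iff₀ hm0]; linarith [hi]
    have hnm2 : ((n:ℝ)/mS n S)^2 ≤ ((s:ℝ)+1)^2 :=
      pow_le_pow_left₀ (by positivity) hnm 2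
    have h4s : ((s:ℝ)+1)^2 ≤ (4:ℝ)^s := by
      have h := nat_sq_le s hs1
      have hcast : (((s+1)^2 : ℕ) : ℝ) ≤ ((4^s : ℕ) : ℝ) := by exact_mod_cast h
      push_cast at hcast
      exact hcast
    have heq : (n:ℝ)^2 * (muS n S ^ k / mS n S)^2
        = ((n:ℝ)/mS n S)^2 * (muS n S ^ k)^2 := by
      field_simp
    rw [heq]
    have hrhs : (4/(n:ℝ)) ^ s * Real.exp (-c)
        = (4:ℝ)^s * (((n:ℝ)^s)⁻¹ * Real.exp (-c)) := by
      rw [div_pow, div_eq_mul_inv, mul_assoc]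
    rw [hrhs]
    exact mul_le_mul (le_trans hnm2 h4s) hA (by positivity) (by positivity)
  have hsum : (n:ℝ)^2 * QA n x₀ k
      ≤ (∑ S ∈ (univ : Finset (Finset (Fin n))).erase ∅, (4/(n:ℝ)) ^ S.card)
          * Real.exp (-c) := by
    rw [QA, Finset.mul_sum, Finset.sum_mul]
    exact Finset.sum_le_sum perS
  have hbinom : ∑ S ∈ (univ : Finset (Finset (Fin n))).erase ∅, (4/(n:ℝ)) ^ S.card
      ≤ 54 := by
    have h1 : (4/(n:ℝ) + 1)^n = (4/(n:ℝ))^(Finset.card (∅ : Finset (Fin n)))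
        + ∑ S ∈ (univ : Finset (Finset (Fin n))).erase ∅, (4/(n:ℝ)) ^ S.card := by
      rw [← binom_sum]
      exact (Finset.add_sum_erase _ _ (Finset.mem_univ ∅)).symm
    have h2 : ∑ S ∈ (univ : Finset (Finset (Fin n))).erase ∅, (4/(n:ℝ)) ^ S.card
        = (4/(n:ℝ) + 1)^n - 1 := by
      rw [h1]; simp
    rw [h2]
    have h3 : (4/(n:ℝ) + 1)^n ≤ Real.exp 4 := by
      have hle : 4/(n:ℝ) + 1 ≤ Real.exp (4/(n:ℝ)) := Real.add_one_le_exp _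
      have h0 : (0:ℝ) ≤ 4/(n:ℝ) + 1 := by positivity
      calc (4/(n:ℝ) + 1)^n ≤ Real.exp (4/(n:ℝ))^n := pow_le_pow_left₀ h0 hle n
        _ = Real.exp ((n:ℝ) * (4/(n:ℝ))) := (Real.exp_nat_mul _ n).symm
        _ = Real.exp 4 := by
            congr 1
            field_simp
    have := exp4_lt
    linarith
  calc (n:ℝ)^2 * QA n x₀ k
      ≤ (∑ S ∈ (univ : Finset (Finset (Fin n))).erase ∅, (4/(n:ℝ)) ^ S.card)
          * Real.exp (-c) := hsum
    _ ≤ 54 * Real.exp (-c) :=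
        mul_le_mul_of_nonneg_right hbinom (Real.exp_nonneg _)
lemma key2 {n : ℕ} (hn : 16 ≤ n) (c : ℝ) (hc : 0 ≤ c) (k : ℕ)
    (hk : ((n : ℝ) / 2) * (Real.log n + c) ≤ (k : ℝ)) :
    ((2:ℝ)^n * n * ((2:ℝ)^n * (((n:ℝ)-1)⁻¹)^k))^2 ≤ Real.exp (-c) := by
  have hnR : (16:ℝ) ≤ n := by exact_mod_cast hn
  have hn0 : (0:ℝ) < n := by linarith
  have hn1 : (0:ℝ) < (n:ℝ) - 1 := by linarith
  have hL : (0:ℝ) ≤ Real.log n := Real.log_nonneg (by linarith)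
  have hLc : (0:ℝ) ≤ Real.log n + c := by linarith
  have hlog2 : (2:ℝ) ≤ Real.log ((n:ℝ)-1) := by
    rw [Real.le_log_iff_exp_le hn1]
    have h1 := Real.exp_one_lt_d9
    have h2 : Real.exp 2 = (Real.exp 1)^2 := by
      rw [← Real.exp_nat_mul]; norm_num
    nlinarith [Real.exp_pos 1]
  have hek : (((n:ℝ)-1)⁻¹)^k = Real.exp (-((k:ℝ) * Real.log ((n:ℝ)-1))) := by
    rw [Real.exp_neg, Real.exp_nat_mul, Real.exp_log hn1, inv_pow]
  rw [hek]
  -- LHS = (4^n n)² e^{-2k log(n-1)}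
  have hLHS : ((2:ℝ)^n * n * ((2:ℝ)^n * Real.exp (-((k:ℝ) * Real.log ((n:ℝ)-1)))))^2
      = ((4:ℝ)^n * (n:ℝ))^2 * Real.exp (-(2*(k:ℝ) * Real.log ((n:ℝ)-1))) := by
    have e1 : Real.exp (-((k:ℝ) * Real.log ((n:ℝ)-1)))^2
        = Real.exp (-(2*(k:ℝ) * Real.log ((n:ℝ)-1))) := by
      rw [sq, ← Real.exp_add]; ring_nf
    calc ((2:ℝ)^n * n * ((2:ℝ)^n * Real.exp (-((k:ℝ) * Real.log ((n:ℝ)-1)))))^2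
        = ((2:ℝ)^n * (2:ℝ)^n * n)^2 * Real.exp (-((k:ℝ) * Real.log ((n:ℝ)-1)))^2 := by
          ring
      _ = ((4:ℝ)^n * (n:ℝ))^2 * Real.exp (-(2*(k:ℝ) * Real.log ((n:ℝ)-1))) := by
          rw [e1]
          have h44 : (2:ℝ)^n * (2:ℝ)^n = (4:ℝ)^n := by
            rw [← mul_pow]; norm_num
          rw [h44]
  rw [hLHS]
  -- (4^n n)² ≤ exp(2 n log n)
  have hA : ((4:ℝ)^n * (n:ℝ))^2 ≤ Real.exp (2*(n:ℝ) * Real.log n) := by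
    have hnat : 4^n * n ≤ n^n := by
      calc 4^n * n ≤ 4^n * 4^n := by
            apply Nat.mul_le_mul_left
            calc n ≤ 2^n := (Nat.lt_two_pow_self).le
              _ ≤ 4^n := Nat.pow_le_pow_left (by norm_num) n
        _ = 16^n := by rw [← Nat.mul_pow]
        _ ≤ n^n := Nat.pow_le_pow_left hn n
    have hcast : (4:ℝ)^n * (n:ℝ) ≤ (n:ℝ)^n := by exact_mod_cast hnat
    have hpos : (0:ℝ) ≤ (4:ℝ)^n * (n:ℝ) := by positivity
    have h2 : ((4:ℝ)^n * (n:ℝ))^2 ≤ ((n:ℝ)^n)^2 := pow_le_pow_left₀ hpos hcast 2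
    have h3 : ((n:ℝ)^n)^2 = Real.exp (2*(n:ℝ) * Real.log n) := by
      have : ((n:ℝ)^n) = Real.exp ((n:ℝ) * Real.log n) := by
        rw [Real.exp_nat_mul, Real.exp_log hn0]
      rw [this, sq, ← Real.exp_add]
      ring_nf
    rw [← h3]
    exact h2
  -- exponent comparison : 2n log n + c ≤ 2k log(n-1)
  have hcomp : 2*(n:ℝ)*Real.log n + c ≤ 2*(k:ℝ) * Real.log ((n:ℝ)-1) := by
    have h2k : (n:ℝ) * (Real.log n + c) ≤ 2*(k:ℝ) := by linarith
    have hk0 : (0:ℝ) ≤ 2*(k:ℝ) := by positivity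
    have step1 : (n:ℝ) * (Real.log n + c) * 2 ≤ 2*(k:ℝ) * Real.log ((n:ℝ)-1) := by
      calc (n:ℝ) * (Real.log n + c) * 2 ≤ (2*(k:ℝ)) * 2 := by nlinarith
        _ ≤ 2*(k:ℝ) * Real.log ((n:ℝ)-1) := by nlinarith
    nlinarith
  calc ((4:ℝ)^n * (n:ℝ))^2 * Real.exp (-(2*(k:ℝ) * Real.log ((n:ℝ)-1)))
      ≤ Real.exp (2*(n:ℝ) * Real.log n) * Real.exp (-(2*(k:ℝ) * Real.log ((n:ℝ)-1))) := by
        exact mul_le_mul_of_nonneg_right hA (Real.exp_nonneg _)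
    _ = Real.exp (2*(n:ℝ) * Real.log n - 2*(k:ℝ) * Real.log ((n:ℝ)-1)) := by
        rw [← Real.exp_add]; ring_nf
    _ ≤ Real.exp (-c) := by
        apply Real.exp_le_exp.mpr
        linarith

end KLL

/-- There are `C > 0` and `n₀` such that for all `n ≥ n₀`, every
starting point `(ω₀,x₀)`, every `c ≥ 0` and every integer `k ≥ (n/2)(log n + c)`:
`‖𝓜_X^k(δ_{ω₀}⊗δ_{x₀}) − (2^n·n)^{−1}·1‖_TV² ≤ C·e^{−c}`. -/
theorem complete_graph_lamplighter_cutoff_upper :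
    ∃ C : ℝ, 0 < C ∧ ∃ n₀ : ℕ, ∀ n : ℕ, n₀ ≤ n →
      ∀ (ω₀ : Fin n → ZMod 2) (x₀ : Fin n) (c : ℝ), 0 ≤ c →
        ∀ k : ℕ, ((n : ℝ) / 2) * (Real.log n + c) ≤ (k : ℝ) →
          ((1 / 2 : ℝ) * ∑ p : (Fin n → ZMod 2) × Fin n,
              ‖((knLampM n)^[k] (fun q => if q = (ω₀, x₀) then 1 else 0)) p
                - (1 / ((2 : ℂ) ^ n * n))‖) ^ 2
            ≤ C * Real.exp (-c) := by
  refine ⟨200, by norm_num, 16, ?_⟩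
  intro n hn ω₀ x₀ c hc k hk
  have hn2 : 2 ≤ n := by omega
  have hnR : (16:ℝ) ≤ n := by exact_mod_cast hn
  have hn0 : (0:ℝ) < n := by linarith
  have hlogpos : 0 < Real.log n := Real.log_pos (by linarith)
  have hk1 : 1 ≤ k := by
    rcases Nat.eq_zero_or_pos k with rfl | h
    · exfalso
      have hpos := mul_pos (by linarith : (0:ℝ) < (n:ℝ)/2)
        (by linarith : (0:ℝ) < Real.log n + c)
      simp only [Nat.cast_zero] at hk
      linarith
    · exact h
  have hδ : (fun q : (Fin n → ZMod 2) × Fin n => if q = (ω₀,x₀) then (1:ℂ) else 0)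
      = fun q => (((if q = (ω₀,x₀) then (1:ℝ) else 0) : ℝ) : ℂ) := by
    funext q; split <;> simp
  have hit : (knLampM n)^[k] (fun q => if q = (ω₀,x₀) then (1:ℂ) else 0)
      = fun p => ((KLL.Ffun n ω₀ x₀ k p : ℝ) : ℂ) := by
    rw [hδ, KLL.knLampM_iterate_cast, KLL.iterate_formula hn2 ω₀ x₀ k hk1]
  have hCst : (1 / ((2:ℂ)^n * (n:ℂ))) = (((1 / ((2:ℝ)^n * (n:ℝ))) : ℝ) : ℂ) := by
    push_cast
    norm_num
  have hnorm : ∀ p : (Fin n → ZMod 2) × Fin n,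
      ‖((knLampM n)^[k] (fun q => if q = (ω₀,x₀) then (1:ℂ) else 0)) p
          - (1/((2:ℂ)^n * n))‖
        = |KLL.Ffun n ω₀ x₀ k p - 1/((2:ℝ)^n * (n:ℝ))| := by
    intro p
    rw [hit, hCst, ← Complex.ofReal_sub, Complex.norm_real, Real.norm_eq_abs]
  rw [Finset.sum_congr rfl (fun p _ => hnorm p)]
  have hL1 := KLL.l1_bound hn ω₀ x₀ k
  set Sr := ∑ p : (Fin n → ZMod 2) × Fin n,
    |KLL.Ffun n ω₀ x₀ k p - 1/((2:ℝ)^n * (n:ℝ))| with hSr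
  set a := 2 * (n:ℝ) * Real.sqrt (KLL.QA n x₀ k) with ha
  set b := (2:ℝ)^n * (n:ℝ) * ((2:ℝ)^n * (((n:ℝ)-1)⁻¹)^k) with hb
  have hQA0 : 0 ≤ KLL.QA n x₀ k := Finset.sum_nonneg fun S _ => sq_nonneg _
  have hS0 : 0 ≤ Sr := Finset.sum_nonneg fun p _ => abs_nonneg _
  have ha0 : 0 ≤ a := by
    rw [ha]; positivity
  have hb0 : 0 ≤ b := by
    rw [hb]
    have h1 : (0:ℝ) ≤ (((n:ℝ)-1)⁻¹)^k := pow_nonneg (inv_nonneg.mpr (by linarith)) k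
    positivity
  have ha2 : a^2 = 4 * ((n:ℝ)^2 * KLL.QA n x₀ k) := by
    rw [ha, mul_pow, mul_pow, Real.sq_sqrt hQA0]; ring
  have hkey1 := KLL.key1 hn x₀ c hc k hk
  have hkey2 := KLL.key2 hn c hc k hk
  have hab : Sr ≤ a + b := hL1
  have ha2' : a^2 ≤ 216 * Real.exp (-c) := by
    rw [ha2]; linarith
  have hb2' : b^2 ≤ Real.exp (-c) := hkey2
  have hSsq : Sr^2 ≤ (a+b)^2 := by
    nlinarith [mul_nonneg (sub_nonneg.mpr hab) (by linarith : (0:ℝ) ≤ a + b + Sr)]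
  have hfin : ((1/2 : ℝ) * Sr)^2 ≤ 200 * Real.exp (-c) := by
    nlinarith [sq_nonneg (a - b), Real.exp_pos (-c)]
  exact hfin
end
end

section
/- There exists n₀ such that for every n ≥ n₀, every starting vertex x₀ ∈ K_n, every real c with 0 < c < log n, and every integer k with 0 ≤ k ≤ (n/2)(log n − c), the distribution p^{(k)} = 𝓜_X^k(δ_{0_X}⊗δ_{x₀}) of the walk after k steps started with all lamps off satisfies ‖p^{(k)} − π‖_TV ≥ 1 − 20·e^{−c}, where π is the uniform distribution on 𝓛(K_n). -/
open Finset

noncomputable section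

namespace CGLL

/-- lamp configurations -/
abbrev Cfg (n : ℕ) := Fin n → ZMod 2
/-- states of the lamplighter chain -/
abbrev St (n : ℕ) := Cfg n × Fin n

/-- indicator that a lamp is off -/
def chi (b : ZMod 2) : ℝ := if b = 0 then 1 else 0

/-- number of off lamps -/
def Wr {n : ℕ} (θ : Cfg n) : ℝ := ∑ z, chi (θ z)

/-- real version of the Markov operator -/
def Tre (n : ℕ) (F : St n → ℝ) : St n → ℝ :=
  fun p =>
    (1 / (4 * ((n : ℝ) - 1))) *
      ∑ y ∈ univ.filter (fun y => y ≠ p.2),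
        (F (p.1, y) + F (p.1 + lampDelta p.2, y) + F (p.1 + lampDelta y, y) +
          F (p.1 + lampDelta p.2 + lampDelta y, y))

lemma knLampM_ofReal {n : ℕ} (F : St n → ℝ) :
    knLampM n (fun q => (F q : ℂ)) = fun q => ((Tre n F q : ℝ) : ℂ) := by
  funext q
  simp only [knLampM, Tre]
  push_cast
  ring

lemma iter_ofReal {n : ℕ} (F : St n → ℝ) (k : ℕ) :
    (knLampM n)^[k] (fun q => (F q : ℂ)) = fun q => (((Tre n)^[k] F q : ℝ) : ℂ) := by
  induction k generalizing F with
  | zero => simp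
  | succ m ih =>
      rw [Function.iterate_succ_apply, Function.iterate_succ_apply, knLampM_ofReal, ih]

lemma zmod2_cases : ∀ b : ZMod 2, b = 0 ∨ b = 1 := by decide

lemma zmod2_add_self : ∀ b : ZMod 2, b + b = 0 := by decide

lemma cfg_add_self {n : ℕ} (v : Cfg n) : v + v = 0 := by
  funext z; exact zmod2_add_self (v z)

lemma chi_add_one (b : ZMod 2) : chi (b + 1) = 1 - chi b := by
  rcases zmod2_cases b with h | h <;> subst h <;>
    simp [chi, show ((1 : ZMod 2) + 1) = 0 from by decide]

lemma chi_sq (b : ZMod 2) : chi b * chi b = chi b := by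
  rcases zmod2_cases b with h | h <;> subst h <;> simp [chi]

lemma chi_nonneg (b : ZMod 2) : 0 ≤ chi b := by
  rcases zmod2_cases b with h | h <;> subst h <;> simp [chi]

lemma chi_le_one (b : ZMod 2) : chi b ≤ 1 := by
  rcases zmod2_cases b with h | h <;> subst h <;> simp [chi]

lemma flip_apply_self {n : ℕ} (θ : Cfg n) (x : Fin n) :
    (θ + lampDelta x) x = θ x + 1 := by
  simp [lampDelta]

lemma flip_apply_ne {n : ℕ} (θ : Cfg n) {z x : Fin n} (h : z ≠ x) :
    (θ + lampDelta x) z = θ z := by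
  simp [lampDelta, h]

lemma chi_flip_self {n : ℕ} (θ : Cfg n) (x : Fin n) :
    chi ((θ + lampDelta x) x) = 1 - chi (θ x) := by
  rw [flip_apply_self, chi_add_one]

lemma Wr_flip {n : ℕ} (θ : Cfg n) (x : Fin n) :
    Wr (θ + lampDelta x) = Wr θ + 1 - 2 * chi (θ x) := by
  unfold Wr
  rw [← Finset.sum_erase_add _ _ (mem_univ x), ← Finset.sum_erase_add _ (fun z => chi (θ z)) (mem_univ x)]
  have h1 : ∑ z ∈ univ.erase x, chi ((θ + lampDelta x) z) = ∑ z ∈ univ.erase x, chi (θ z) :=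
    Finset.sum_congr rfl (fun z hz => by rw [flip_apply_ne θ (Finset.mem_erase.1 hz).1])
  rw [h1, chi_flip_self]
  ring

lemma Wr_nonneg {n : ℕ} (θ : Cfg n) : 0 ≤ Wr θ :=
  Finset.sum_nonneg fun z _ => chi_nonneg _

lemma Wr_le {n : ℕ} (θ : Cfg n) : Wr θ ≤ n := by
  calc Wr θ ≤ ∑ _z : Fin n, (1 : ℝ) := Finset.sum_le_sum fun z _ => chi_le_one _
  _ = n := by simp

lemma Wr_zero {n : ℕ} : Wr (0 : Cfg n) = n := by
  unfold Wr
  simp [chi]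

lemma sum_shift {n : ℕ} (v : Cfg n) (f g : Cfg n → ℝ) :
    ∑ θ : Cfg n, f (θ + v) * g θ = ∑ θ : Cfg n, f θ * g (θ + v) := by
  apply Fintype.sum_equiv (Equiv.addRight v)
  intro θ
  simp only [Equiv.coe_addRight]
  rw [add_assoc, cfg_add_self, add_zero]

lemma key_reindex {n : ℕ} (F : St n → ℝ) (G : Cfg n → Fin n → ℝ) (x y : Fin n) :
    (∑ θ : Cfg n, (F (θ, y) + F (θ + lampDelta x, y) + F (θ + lampDelta y, y) +
        F (θ + lampDelta x + lampDelta y, y)) * G θ x)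
      = ∑ θ : Cfg n, F (θ, y) * (G θ x + G (θ + lampDelta x) x + G (θ + lampDelta y) x +
          G (θ + lampDelta x + lampDelta y) x) := by
  simp only [add_mul, mul_add, Finset.sum_add_distrib]
  congr 1
  congr 1
  congr 1
  · exact sum_shift (lampDelta x) (fun σ => F (σ, y)) (fun σ => G σ x)
  · exact sum_shift (lampDelta y) (fun σ => F (σ, y)) (fun σ => G σ x)
  · have h := sum_shift (lampDelta x + lampDelta y) (fun σ => F (σ, y)) (fun σ => G σ x)
    simp only [← add_assoc] at h
    exact h

lemma transfer {n : ℕ} (F : St n → ℝ) (G : Cfg n → Fin n → ℝ) :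
    ∑ q : St n, Tre n F q * G q.1 q.2
      = (1 / (4 * ((n : ℝ) - 1))) * ∑ y : Fin n, ∑ θ : Cfg n, F (θ, y) *
          ∑ x ∈ univ.filter (fun x => x ≠ y),
            (G θ x + G (θ + lampDelta x) x + G (θ + lampDelta y) x +
             G (θ + lampDelta x + lampDelta y) x) := by
  have step1 : ∑ q : St n, Tre n F q * G q.1 q.2
      = (1 / (4 * ((n : ℝ) - 1))) * ∑ x : Fin n, ∑ y : Fin n, ∑ θ : Cfg n,
          (if y ≠ x then
            (F (θ, y) + F (θ + lampDelta x, y) + F (θ + lampDelta y, y) +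
              F (θ + lampDelta x + lampDelta y, y)) * G θ x
           else 0) := by
    rw [Fintype.sum_prod_type, Finset.sum_comm, Finset.mul_sum]
    refine Finset.sum_congr rfl fun x _ => ?_
    have inner : ∀ θ : Cfg n, Tre n F (θ, x) * G θ x
        = (1 / (4 * ((n : ℝ) - 1))) * ∑ y : Fin n,
            (if y ≠ x then
              (F (θ, y) + F (θ + lampDelta x, y) + F (θ + lampDelta y, y) +
                F (θ + lampDelta x + lampDelta y, y)) * G θ x
             else 0) := by
      intro θ
      simp only [Tre]
      rw [mul_assoc, Finset.sum_mul, Finset.sum_filter]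
    calc ∑ θ : Cfg n, Tre n F (θ, x) * G θ x
        = ∑ θ : Cfg n, ((1 / (4 * ((n : ℝ) - 1))) * ∑ y : Fin n,
            (if y ≠ x then
              (F (θ, y) + F (θ + lampDelta x, y) + F (θ + lampDelta y, y) +
                F (θ + lampDelta x + lampDelta y, y)) * G θ x
             else 0)) := Finset.sum_congr rfl fun θ _ => inner θ
      _ = (1 / (4 * ((n : ℝ) - 1))) * ∑ θ : Cfg n, ∑ y : Fin n,
            (if y ≠ x then
              (F (θ, y) + F (θ + lampDelta x, y) + F (θ + lampDelta y, y) +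
                F (θ + lampDelta x + lampDelta y, y)) * G θ x
             else 0) := by rw [Finset.mul_sum]
      _ = _ := by rw [Finset.sum_comm]
  rw [step1]
  congr 1
  rw [Finset.sum_comm]
  refine Finset.sum_congr rfl fun y _ => ?_
  have rhs : ∀ θ : Cfg n, F (θ, y) *
      (∑ x ∈ univ.filter (fun x => x ≠ y),
        (G θ x + G (θ + lampDelta x) x + G (θ + lampDelta y) x +
         G (θ + lampDelta x + lampDelta y) x))
      = ∑ x : Fin n, (if x ≠ y then F (θ, y) *
          (G θ x + G (θ + lampDelta x) x + G (θ + lampDelta y) x +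
           G (θ + lampDelta x + lampDelta y) x) else 0) := by
    intro θ
    rw [Finset.mul_sum, Finset.sum_filter]
  refine Eq.trans (Finset.sum_congr rfl fun x _ => ?_)
    (Finset.sum_comm.trans (Finset.sum_congr rfl fun θ _ => (rhs θ).symm))
  by_cases h : y = x
  · subst h; simp
  · have h1 : ¬ (x = y) := fun hxy => h hxy.symm
    simp only [ne_eq, h, h1, not_false_iff, if_true]
    exact key_reindex F G x y

lemma transfer' {n : ℕ} (F : St n → ℝ) (G s : Cfg n → Fin n → ℝ)
    (h : ∀ (θ : Cfg n) (y : Fin n),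
      (∑ x ∈ univ.filter (fun x => x ≠ y),
        (G θ x + G (θ + lampDelta x) x + G (θ + lampDelta y) x +
         G (θ + lampDelta x + lampDelta y) x)) = s θ y) :
    ∑ q : St n, Tre n F q * G q.1 q.2
      = (1 / (4 * ((n : ℝ) - 1))) * ∑ q : St n, F q * s q.1 q.2 := by
  rw [transfer F G]
  congr 1
  calc ∑ y : Fin n, ∑ θ : Cfg n, F (θ, y) *
          ∑ x ∈ univ.filter (fun x => x ≠ y),
            (G θ x + G (θ + lampDelta x) x + G (θ + lampDelta y) x +
             G (θ + lampDelta x + lampDelta y) x)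
      = ∑ y : Fin n, ∑ θ : Cfg n, F (θ, y) * s θ y :=
        Finset.sum_congr rfl fun y _ => Finset.sum_congr rfl fun θ _ => by rw [h θ y]
    _ = ∑ q : St n, F q * s q.1 q.2 := by
        rw [Fintype.sum_prod_type]
        exact Finset.sum_comm

lemma sum_chi_erase {n : ℕ} (θ : Cfg n) (y : Fin n) :
    ∑ x ∈ univ.erase y, chi (θ x) = Wr θ - chi (θ y) := by
  have h := Finset.sum_erase_add univ (fun x => chi (θ x)) (Finset.mem_univ y)
  unfold Wr
  linarith [h]

lemma card_erase_real {n : ℕ} (hn : 1 ≤ n) (y : Fin n) :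
    (((univ : Finset (Fin n)).erase y).card : ℝ) = (n : ℝ) - 1 := by
  rw [Finset.card_erase_of_mem (Finset.mem_univ y), Finset.card_univ, Fintype.card_fin]
  have : (1:ℕ) ≤ n := hn
  push_cast [this]
  ring

/-- the eigenvalue `(n-2)/(n-1)` -/
def lam (n : ℕ) : ℝ := ((n : ℝ) - 2) / ((n : ℝ) - 1)

section identities
variable {n : ℕ}

lemma br1 (hn : 1 ≤ n) (θ : Cfg n) (y : Fin n) :
    (∑ _x ∈ univ.filter (fun x => x ≠ y), ((1:ℝ) + 1 + 1 + 1)) = 4 * ((n:ℝ) - 1) := by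
  rw [Finset.filter_ne', Finset.sum_const, nsmul_eq_mul, card_erase_real hn y]
  ring

lemma L0_step (hn : 2 ≤ n) (F : St n → ℝ) :
    ∑ q : St n, Tre n F q = ∑ q : St n, F q := by
  have hne : ((n:ℝ) - 1) ≠ 0 := by
    have : (2:ℝ) ≤ (n:ℝ) := by exact_mod_cast hn
    nlinarith
  have h := transfer' F (fun _ _ => (1:ℝ)) (fun _ _ => 4*((n:ℝ)-1))
    (fun θ y => br1 (le_trans (by norm_num) hn) θ y)
  simp only [mul_one] at h
  rw [h, ← Finset.sum_mul]
  set S0 := ∑ q : St n, F q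
  field_simp

lemma br2 (hn : 1 ≤ n) (θ : Cfg n) (y : Fin n) :
    (∑ x ∈ univ.filter (fun x => x ≠ y),
      (chi (θ x) + chi ((θ + lampDelta x) x) + chi ((θ + lampDelta y) x) +
       chi ((θ + lampDelta x + lampDelta y) x))) = 2 * ((n:ℝ) - 1) := by
  rw [Finset.filter_ne']
  have point : ∀ x ∈ univ.erase y,
      (chi (θ x) + chi ((θ + lampDelta x) x) + chi ((θ + lampDelta y) x) +
       chi ((θ + lampDelta x + lampDelta y) x)) = (2:ℝ) := by
    intro x hx
    have hxy : x ≠ y := (Finset.mem_erase.1 hx).1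
    rw [chi_flip_self, flip_apply_ne θ hxy, flip_apply_ne (θ + lampDelta x) hxy,
      chi_flip_self]
    ring
  rw [Finset.sum_congr rfl point, Finset.sum_const, nsmul_eq_mul, card_erase_real hn y]
  ring

lemma Lchi_step (hn : 2 ≤ n) (F : St n → ℝ) :
    ∑ q : St n, Tre n F q * chi (q.1 q.2) = (1/2) * ∑ q : St n, F q := by
  have hne : ((n:ℝ) - 1) ≠ 0 := by
    have : (2:ℝ) ≤ (n:ℝ) := by exact_mod_cast hn
    nlinarith
  have h := transfer' F (fun θ x => chi (θ x)) (fun _ _ => 2*((n:ℝ)-1))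
    (fun θ y => br2 (le_trans (by norm_num) hn) θ y)
  rw [h, ← Finset.sum_mul]
  set S0 := ∑ q : St n, F q
  field_simp
  ring

lemma br3 (hn : 1 ≤ n) (θ : Cfg n) (y : Fin n) :
    (∑ x ∈ univ.filter (fun x => x ≠ y),
      (Wr θ + Wr (θ + lampDelta x) + Wr (θ + lampDelta y) +
       Wr (θ + lampDelta x + lampDelta y)))
    = 4 * ((n:ℝ) - 2) * (Wr θ - chi (θ y)) + 4 * ((n:ℝ) - 1) := by
  rw [Finset.filter_ne']
  have point : ∀ x ∈ univ.erase y,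
      (Wr θ + Wr (θ + lampDelta x) + Wr (θ + lampDelta y) +
       Wr (θ + lampDelta x + lampDelta y))
      = (4 * Wr θ + 4 - 4 * chi (θ y)) - 4 * chi (θ x) := by
    intro x hx
    have hxy : x ≠ y := (Finset.mem_erase.1 hx).1
    have hyx : y ≠ x := hxy.symm
    rw [Wr_flip (θ + lampDelta x) y, flip_apply_ne θ hyx, Wr_flip θ x, Wr_flip θ y]
    ring
  rw [Finset.sum_congr rfl point, Finset.sum_sub_distrib, Finset.sum_const,
    nsmul_eq_mul, card_erase_real hn y, ← Finset.mul_sum, sum_chi_erase]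
  ring

lemma LW_step (hn : 2 ≤ n) (F : St n → ℝ) :
    ∑ q : St n, Tre n F q * Wr q.1
      = lam n * ((∑ q : St n, F q * Wr q.1) - ∑ q : St n, F q * chi (q.1 q.2))
        + ∑ q : St n, F q := by
  have hne : ((n:ℝ) - 1) ≠ 0 := by
    have : (2:ℝ) ≤ (n:ℝ) := by exact_mod_cast hn
    nlinarith
  have h := transfer' F (fun θ _ => Wr θ)
    (fun θ y => 4 * ((n:ℝ) - 2) * (Wr θ - chi (θ y)) + 4 * ((n:ℝ) - 1))
    (fun θ y => br3 (le_trans (by norm_num) hn) θ y)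
  rw [h]
  have expand : ∀ q : St n,
      F q * (4 * ((n:ℝ) - 2) * (Wr q.1 - chi (q.1 q.2)) + 4 * ((n:ℝ) - 1))
      = 4 * ((n:ℝ) - 2) * (F q * Wr q.1) - 4 * ((n:ℝ) - 2) * (F q * chi (q.1 q.2))
        + 4 * ((n:ℝ) - 1) * F q := fun q => by ring
  rw [Finset.sum_congr rfl fun q _ => expand q]
  simp only [Finset.sum_add_distrib, Finset.sum_sub_distrib, ← Finset.mul_sum]
  set S0 := ∑ q : St n, F q
  set SW := ∑ q : St n, F q * Wr q.1
  set SX := ∑ q : St n, F q * chi (q.1 q.2)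
  unfold lam
  field_simp

lemma br4 (hn : 1 ≤ n) (θ : Cfg n) (y : Fin n) :
    (∑ x ∈ univ.filter (fun x => x ≠ y),
      (Wr θ * chi (θ x) + Wr (θ + lampDelta x) * chi ((θ + lampDelta x) x) +
       Wr (θ + lampDelta y) * chi ((θ + lampDelta y) x) +
       Wr (θ + lampDelta x + lampDelta y) * chi ((θ + lampDelta x + lampDelta y) x)))
    = 2 * ((n:ℝ) - 2) * (Wr θ - chi (θ y)) + 3 * ((n:ℝ) - 1) := by
  rw [Finset.filter_ne']
  have point : ∀ x ∈ univ.erase y,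
      (Wr θ * chi (θ x) + Wr (θ + lampDelta x) * chi ((θ + lampDelta x) x) +
       Wr (θ + lampDelta y) * chi ((θ + lampDelta y) x) +
       Wr (θ + lampDelta x + lampDelta y) * chi ((θ + lampDelta x + lampDelta y) x))
      = (2 * Wr θ + 3 - 2 * chi (θ y)) - 2 * chi (θ x) := by
    intro x hx
    have hxy : x ≠ y := (Finset.mem_erase.1 hx).1
    have hyx : y ≠ x := hxy.symm
    rw [Wr_flip (θ + lampDelta x) y, flip_apply_ne θ hyx, Wr_flip θ x, Wr_flip θ y,
      chi_flip_self, flip_apply_ne θ hxy, flip_apply_ne (θ + lampDelta x) hxy,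
      chi_flip_self]
    have hp := chi_sq (θ x)
    have hq := chi_sq (θ y)
    nlinarith [hp, hq]
  rw [Finset.sum_congr rfl point, Finset.sum_sub_distrib, Finset.sum_const,
    nsmul_eq_mul, card_erase_real hn y, ← Finset.mul_sum, sum_chi_erase]
  ring

lemma LWchi_step (hn : 2 ≤ n) (F : St n → ℝ) :
    ∑ q : St n, Tre n F q * (Wr q.1 * chi (q.1 q.2))
      = (lam n / 2) * ((∑ q : St n, F q * Wr q.1) - ∑ q : St n, F q * chi (q.1 q.2))
        + (3/4) * ∑ q : St n, F q := by
  have hne : ((n:ℝ) - 1) ≠ 0 := by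
    have : (2:ℝ) ≤ (n:ℝ) := by exact_mod_cast hn
    nlinarith
  have h := transfer' F (fun θ x => Wr θ * chi (θ x))
    (fun θ y => 2 * ((n:ℝ) - 2) * (Wr θ - chi (θ y)) + 3 * ((n:ℝ) - 1))
    (fun θ y => br4 (le_trans (by norm_num) hn) θ y)
  rw [h]
  have expand : ∀ q : St n,
      F q * (2 * ((n:ℝ) - 2) * (Wr q.1 - chi (q.1 q.2)) + 3 * ((n:ℝ) - 1))
      = 2 * ((n:ℝ) - 2) * (F q * Wr q.1) - 2 * ((n:ℝ) - 2) * (F q * chi (q.1 q.2))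
        + 3 * ((n:ℝ) - 1) * F q := fun q => by ring
  rw [Finset.sum_congr rfl fun q _ => expand q]
  simp only [Finset.sum_add_distrib, Finset.sum_sub_distrib, ← Finset.mul_sum]
  set S0 := ∑ q : St n, F q
  set SW := ∑ q : St n, F q * Wr q.1
  set SX := ∑ q : St n, F q * chi (q.1 q.2)
  unfold lam
  field_simp
  ring

lemma br5 (hn : 1 ≤ n) (θ : Cfg n) (y : Fin n) :
    (∑ x ∈ univ.filter (fun x => x ≠ y),
      (Wr θ ^ 2 + Wr (θ + lampDelta x) ^ 2 + Wr (θ + lampDelta y) ^ 2 +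
       Wr (θ + lampDelta x + lampDelta y) ^ 2))
    = 4 * ((n:ℝ) - 3) * Wr θ ^ 2 - 8 * ((n:ℝ) - 3) * (Wr θ * chi (θ y))
      + 4 * (2*(n:ℝ) - 3) * Wr θ - 4 * (n:ℝ) * chi (θ y) + 6 * ((n:ℝ) - 1) := by
  rw [Finset.filter_ne']
  have point : ∀ x ∈ univ.erase y,
      (Wr θ ^ 2 + Wr (θ + lampDelta x) ^ 2 + Wr (θ + lampDelta y) ^ 2 +
       Wr (θ + lampDelta x + lampDelta y) ^ 2)
      = (4 * Wr θ ^ 2 + 8 * Wr θ - 8 * (Wr θ * chi (θ y)) + 6 - 4 * chi (θ y))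
        + (8 * chi (θ y) - 8 * Wr θ - 4) * chi (θ x) := by
    intro x hx
    have hxy : x ≠ y := (Finset.mem_erase.1 hx).1
    have hyx : y ≠ x := hxy.symm
    rw [Wr_flip (θ + lampDelta x) y, flip_apply_ne θ hyx, Wr_flip θ x, Wr_flip θ y]
    have hp := chi_sq (θ x)
    have hq := chi_sq (θ y)
    nlinarith [hp, hq]
  rw [Finset.sum_congr rfl point, Finset.sum_add_distrib, Finset.sum_const,
    nsmul_eq_mul, card_erase_real hn y, ← Finset.mul_sum, sum_chi_erase]
  have hq := chi_sq (θ y)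
  nlinarith [hq]

lemma LWW_step (hn : 2 ≤ n) (F : St n → ℝ) :
    ∑ q : St n, Tre n F q * Wr q.1 ^ 2
      = (((n:ℝ) - 3)/((n:ℝ) - 1)) * ((∑ q : St n, F q * Wr q.1 ^ 2)
          - 2 * (∑ q : St n, F q * (Wr q.1 * chi (q.1 q.2)))
          + ∑ q : St n, F q * chi (q.1 q.2))
        + ((2*(n:ℝ) - 3)/((n:ℝ) - 1)) * ((∑ q : St n, F q * Wr q.1)
          - ∑ q : St n, F q * chi (q.1 q.2))
        + (3/2) * ∑ q : St n, F q := by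
  have hne : ((n:ℝ) - 1) ≠ 0 := by
    have : (2:ℝ) ≤ (n:ℝ) := by exact_mod_cast hn
    nlinarith
  have h := transfer' F (fun θ _ => Wr θ ^ 2)
    (fun θ y => 4 * ((n:ℝ) - 3) * Wr θ ^ 2 - 8 * ((n:ℝ) - 3) * (Wr θ * chi (θ y))
      + 4 * (2*(n:ℝ) - 3) * Wr θ - 4 * (n:ℝ) * chi (θ y) + 6 * ((n:ℝ) - 1))
    (fun θ y => br5 (le_trans (by norm_num) hn) θ y)
  rw [h]
  have expand : ∀ q : St n,
      F q * (4 * ((n:ℝ) - 3) * Wr q.1 ^ 2 - 8 * ((n:ℝ) - 3) * (Wr q.1 * chi (q.1 q.2))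
        + 4 * (2*(n:ℝ) - 3) * Wr q.1 - 4 * (n:ℝ) * chi (q.1 q.2) + 6 * ((n:ℝ) - 1))
      = 4 * ((n:ℝ) - 3) * (F q * Wr q.1 ^ 2)
        - 8 * ((n:ℝ) - 3) * (F q * (Wr q.1 * chi (q.1 q.2)))
        + 4 * (2*(n:ℝ) - 3) * (F q * Wr q.1)
        - 4 * (n:ℝ) * (F q * chi (q.1 q.2)) + 6 * ((n:ℝ) - 1) * F q := fun q => by ring
  rw [Finset.sum_congr rfl fun q _ => expand q]
  simp only [Finset.sum_add_distrib, Finset.sum_sub_distrib, ← Finset.mul_sum]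
  set S0 := ∑ q : St n, F q
  set SW := ∑ q : St n, F q * Wr q.1
  set SX := ∑ q : St n, F q * chi (q.1 q.2)
  set SWX := ∑ q : St n, F q * (Wr q.1 * chi (q.1 q.2))
  set SWW := ∑ q : St n, F q * Wr q.1 ^ 2
  field_simp
  ring

end identities

/-- initial distribution: all lamps off, walker at `x₀` -/
def dl (n : ℕ) (x₀ : Fin n) : St n → ℝ := fun q => if q = ((0 : Cfg n), x₀) then 1 else 0

lemma sum_dl_mul {n : ℕ} (x₀ : Fin n) (g : St n → ℝ) :
    ∑ q : St n, dl n x₀ q * g q = g (0, x₀) := by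
  unfold dl
  simp only [ite_mul, one_mul, zero_mul]
  rw [Finset.sum_ite_eq' univ ((0 : Cfg n), x₀) g, if_pos (Finset.mem_univ _)]

lemma dl_nonneg {n : ℕ} (x₀ : Fin n) (q : St n) : 0 ≤ dl n x₀ q := by
  unfold dl; split_ifs <;> norm_num

lemma chi_zero_apply {n : ℕ} (x : Fin n) : chi ((0 : Cfg n) x) = 1 := by
  have : (0 : Cfg n) x = 0 := rfl
  rw [this]; simp [chi]

lemma Tre_nonneg {n : ℕ} (F : St n → ℝ) (hF : ∀ q, 0 ≤ F q) (q : St n) :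
    0 ≤ Tre n F q := by
  unfold Tre
  apply mul_nonneg
  · apply div_nonneg (by norm_num)
    have h := q.2.pos
    have h' : (1:ℝ) ≤ (n:ℝ) := by exact_mod_cast h
    linarith
  · refine Finset.sum_nonneg fun y _ => ?_
    have h1 := hF (q.1, y)
    have h2 := hF (q.1 + lampDelta q.2, y)
    have h3 := hF (q.1 + lampDelta y, y)
    have h4 := hF (q.1 + lampDelta q.2 + lampDelta y, y)
    linarith

/-- the expected number of off lamps after `k` steps -/
def Ak (n k : ℕ) : ℝ := (n:ℝ)/2 + ((n:ℝ)-1) * lam n ^ k / 2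

lemma ak_rec {n : ℕ} (hn : 6 ≤ n) (k : ℕ) :
    lam n * (Ak n k - 1/2) + 1 = Ak n (k+1) := by
  have hν : (6:ℝ) ≤ (n:ℝ) := by exact_mod_cast hn
  have h1 : ((n:ℝ) - 1) ≠ 0 := by linarith
  unfold Ak lam
  rw [pow_succ]
  field_simp
  ring

lemma vstep {ν : ℝ} (hν : (6:ℝ) ≤ ν) (a : ℝ) :
    ((ν-3)/(ν-1)) * (a^2 - a + ν/2) + ((2*ν-3)/(ν-1))*(a - 1/2) + 3/2
      ≤ ((ν-2)/(ν-1)*(a-1/2) + 1)^2 + ν/2 := by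
  have h1 : ((ν:ℝ) - 1) ≠ 0 := by linarith
  have expand : ((ν-2)/(ν-1)*(a-1/2) + 1)^2 + ν/2
      - (((ν-3)/(ν-1)) * (a^2 - a + ν/2) + ((2*ν-3)/(ν-1))*(a - 1/2) + 3/2)
      = ((a - ν/2)^2 + ν*(ν-1)/2) / (ν-1)^2 := by
    field_simp
    ring
  have hnum : (0:ℝ) ≤ (a - ν/2)^2 + ν*(ν-1)/2 := by nlinarith [sq_nonneg (a - ν/2)]
  have hpos : (0:ℝ) ≤ ((a - ν/2)^2 + ν*(ν-1)/2) / (ν-1)^2 :=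
    div_nonneg hnum (sq_nonneg _)
  linarith

theorem invariants {n : ℕ} (hn : 6 ≤ n) (x₀ : Fin n) :
    ∀ k, 1 ≤ k →
      (∀ q, 0 ≤ (Tre n)^[k] (dl n x₀) q) ∧
      (∑ q : St n, (Tre n)^[k] (dl n x₀) q = 1) ∧
      (∑ q : St n, (Tre n)^[k] (dl n x₀) q * chi (q.1 q.2) = 1/2) ∧
      (∑ q : St n, (Tre n)^[k] (dl n x₀) q * Wr q.1 = Ak n k) ∧
      (∑ q : St n, (Tre n)^[k] (dl n x₀) q * (Wr q.1 * chi (q.1 q.2)) = Ak n k / 2 + 1/4) ∧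
      (∑ q : St n, (Tre n)^[k] (dl n x₀) q * Wr q.1 ^ 2 ≤ (Ak n k)^2 + (n:ℝ)/2) := by
  have hn2 : 2 ≤ n := by omega
  have hν : (6:ℝ) ≤ (n:ℝ) := by exact_mod_cast hn
  have h1ne : ((n:ℝ) - 1) ≠ 0 := by linarith
  -- delta functionals
  have d0 : ∑ q : St n, dl n x₀ q = 1 := by
    have h := sum_dl_mul x₀ (fun _ => (1:ℝ))
    simp only [mul_one] at h
    exact h
  have dW : ∑ q : St n, dl n x₀ q * Wr q.1 = (n:ℝ) := by
    rw [sum_dl_mul x₀ (fun q => Wr q.1)]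
    exact Wr_zero
  have dX : ∑ q : St n, dl n x₀ q * chi (q.1 q.2) = 1 := by
    rw [sum_dl_mul x₀ (fun q => chi (q.1 q.2))]
    exact chi_zero_apply x₀
  have dWX : ∑ q : St n, dl n x₀ q * (Wr q.1 * chi (q.1 q.2)) = (n:ℝ) := by
    rw [sum_dl_mul x₀ (fun q => Wr q.1 * chi (q.1 q.2))]
    show Wr (0 : Cfg n) * chi ((0 : Cfg n) x₀) = (n:ℝ)
    rw [Wr_zero, chi_zero_apply]; ring
  have dWW : ∑ q : St n, dl n x₀ q * Wr q.1 ^ 2 = (n:ℝ)^2 := by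
    rw [sum_dl_mul x₀ (fun q => Wr q.1 ^ 2)]
    show Wr (0 : Cfg n) ^ 2 = (n:ℝ)^2
    rw [Wr_zero]
  have akone : Ak n 1 = (n:ℝ) - 1 := by
    unfold Ak lam
    rw [pow_one]
    field_simp
    ring
  intro k hk
  induction k, hk using Nat.le_induction with
  | base =>
      rw [Function.iterate_one]
      refine ⟨Tre_nonneg _ (dl_nonneg x₀), ?_, ?_, ?_, ?_, ?_⟩
      · rw [L0_step hn2, d0]
      · rw [Lchi_step hn2, d0]; norm_num
      · rw [LW_step hn2, dW, dX, d0, akone]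
        unfold lam
        field_simp
        ring
      · rw [LWchi_step hn2, dW, dX, d0, akone]
        unfold lam
        field_simp
        ring
      · rw [LWW_step hn2, dWW, dWX, dX, dW, d0, akone]
        have e1 : ((n:ℝ)-3)/((n:ℝ)-1) * ((n:ℝ)^2 - 2*(n:ℝ) + 1) = ((n:ℝ)-3)*((n:ℝ)-1) := by
          field_simp
          ring
        have e2 : (2*(n:ℝ)-3)/((n:ℝ)-1) * ((n:ℝ) - 1) = 2*(n:ℝ)-3 := by
          field_simp
        nlinarith [e1, e2]
  | succ k hk ih =>
      obtain ⟨ihpos, ih0, ihX, ihW, ihWX, ihWW⟩ := ih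
      rw [Function.iterate_succ_apply']
      set F := (Tre n)^[k] (dl n x₀) with hF
      refine ⟨Tre_nonneg _ ihpos, ?_, ?_, ?_, ?_, ?_⟩
      · rw [L0_step hn2, ih0]
      · rw [Lchi_step hn2, ih0]; norm_num
      · rw [LW_step hn2, ihW, ihX, ih0, ak_rec hn k]
      · rw [LWchi_step hn2, ihW, ihX, ih0, ← ak_rec hn k]
        ring
      · rw [LWW_step hn2, ihWX, ihX, ihW, ih0, ← ak_rec hn k]
        have hlam' : (0:ℝ) ≤ ((n:ℝ)-3)/((n:ℝ)-1) := by
          apply div_nonneg <;> linarith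
        have step1 : ((n:ℝ)-3)/((n:ℝ)-1) * ((∑ q : St n, F q * Wr q.1 ^ 2)
              - 2*(Ak n k / 2 + 1/4) + 1/2)
            ≤ ((n:ℝ)-3)/((n:ℝ)-1) * ((Ak n k)^2 + (n:ℝ)/2 - Ak n k) := by
          apply mul_le_mul_of_nonneg_left _ hlam'
          linarith
        have hv := vstep hν (Ak n k)
        unfold lam
        nlinarith [step1, hv]

lemma zmod2_sum (g : ZMod 2 → ℝ) : ∑ b : ZMod 2, g b = g 0 + g 1 := Fin.sum_univ_two g

lemma master {n : ℕ} (f : Fin n → ZMod 2 → ℝ) :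
    ∑ θ : Cfg n, ∏ z, f z (θ z) = ∏ z, (f z 0 + f z 1) := by
  have h := Finset.prod_univ_sum (fun _ : Fin n => (univ : Finset (ZMod 2))) f
  rw [Fintype.piFinset_univ] at h
  rw [← h]
  exact Finset.prod_congr rfl fun z _ => zmod2_sum (f z)

lemma chi_one : chi 1 = 0 := by
  simp [chi, show (1 : ZMod 2) ≠ 0 from by decide]

lemma chi_zero : chi 0 = 1 := by simp [chi]

lemma sum_prod_chi {n : ℕ} (S : Finset (Fin n)) :
    ∑ θ : Cfg n, ∏ z ∈ S, chi (θ z) = (2:ℝ)^n / 2^(S.card) := by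
  have key : ∀ θ : Cfg n, ∏ z ∈ S, chi (θ z)
      = ∏ z : Fin n, (if z ∈ S then chi (θ z) else 1) := by
    intro θ
    rw [Finset.prod_ite_mem univ S (fun z => chi (θ z)), Finset.univ_inter]
  rw [Finset.sum_congr rfl fun θ _ => key θ]
  have hm := master (fun (z : Fin n) (b : ZMod 2) => if z ∈ S then chi b else 1)
  rw [hm]
  have hpt : ∀ z : Fin n, ((if z ∈ S then chi 0 else 1) + (if z ∈ S then chi 1 else 1))
      = if z ∈ S then (1:ℝ) else 2 := by
    intro z
    split_ifs <;> norm_num [chi_zero, chi_one]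
  rw [Finset.prod_congr rfl fun z _ => hpt z, Finset.prod_ite (fun _ => (1:ℝ)) (fun _ => (2:ℝ))]
  simp only [Finset.prod_const_one, Finset.prod_const, one_mul]
  have hfil : univ.filter (fun z => ¬ z ∈ S) = Sᶜ := by
    ext z
    simp [Finset.mem_compl]
  rw [hfil, Finset.card_compl, Fintype.card_fin]
  rw [pow_sub₀ (2:ℝ) (by norm_num) (le_trans (Finset.card_le_univ S) (by simp))]
  rw [div_eq_mul_inv]

lemma sum_chi_single {n : ℕ} (z : Fin n) :
    ∑ θ : Cfg n, chi (θ z) = (2:ℝ)^n / 2 := by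
  have h := sum_prod_chi {z}
  simp only [Finset.prod_singleton, Finset.card_singleton, pow_one] at h
  exact h

lemma sum_chi_pair {n : ℕ} {z w : Fin n} (hzw : z ≠ w) :
    ∑ θ : Cfg n, chi (θ z) * chi (θ w) = (2:ℝ)^n / 4 := by
  have h := sum_prod_chi {z, w}
  simp only [Finset.prod_pair hzw, Finset.card_pair hzw] at h
  norm_num at h
  exact h

lemma sum_one_cfg (n : ℕ) : ∑ _θ : Cfg n, (1:ℝ) = (2:ℝ)^n := by
  rw [Finset.sum_const, Finset.card_univ, Fintype.card_fun, ZMod.card, Fintype.card_fin,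
    nsmul_eq_mul, mul_one]
  push_cast
  ring

lemma sum_Wr_cfg {n : ℕ} (hn : 1 ≤ n) : ∑ θ : Cfg n, Wr θ = (n:ℝ) * (2:ℝ)^n / 2 := by
  unfold Wr
  rw [Finset.sum_comm]
  rw [Finset.sum_congr rfl fun z _ => sum_chi_single z]
  rw [Finset.sum_const, Finset.card_univ, Fintype.card_fin, nsmul_eq_mul]
  ring

lemma sum_Wr_sq_cfg {n : ℕ} (hn : 1 ≤ n) :
    ∑ θ : Cfg n, Wr θ ^ 2
      = (n:ℝ) * ((n:ℝ) - 1) * (2:ℝ)^n / 4 + (n:ℝ) * (2:ℝ)^n / 2 := by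
  have expand : ∀ θ : Cfg n, Wr θ ^ 2 = ∑ z : Fin n, ∑ w : Fin n, chi (θ z) * chi (θ w) := by
    intro θ
    rw [sq]
    exact Finset.sum_mul_sum univ univ (fun z => chi (θ z)) (fun w => chi (θ w))
  rw [Finset.sum_congr rfl fun θ _ => expand θ]
  rw [Finset.sum_comm]
  have inner : ∀ z : Fin n, ∑ θ : Cfg n, ∑ w : Fin n, chi (θ z) * chi (θ w)
      = ((n:ℝ) - 1) * ((2:ℝ)^n/4) + (2:ℝ)^n/2 := by
    intro z
    rw [Finset.sum_comm]
    have split := Finset.sum_erase_add univ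
      (fun w => ∑ θ : Cfg n, chi (θ z) * chi (θ w)) (Finset.mem_univ z)
    rw [← split]
    have hdiag : ∑ θ : Cfg n, chi (θ z) * chi (θ z) = (2:ℝ)^n/2 := by
      rw [Finset.sum_congr rfl fun θ _ => chi_sq (θ z)]
      exact sum_chi_single z
    have hoff : ∀ w ∈ univ.erase z, ∑ θ : Cfg n, chi (θ z) * chi (θ w) = (2:ℝ)^n/4 := by
      intro w hw
      exact sum_chi_pair (Ne.symm (Finset.mem_erase.1 hw).1)
    rw [Finset.sum_congr rfl hoff,
      hdiag, Finset.sum_const, nsmul_eq_mul, card_erase_real hn z]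
  rw [Finset.sum_congr rfl fun z _ => inner z, Finset.sum_const, Finset.card_univ,
    Fintype.card_fin, nsmul_eq_mul]
  ring

lemma pi_var_cfg {n : ℕ} (hn : 1 ≤ n) :
    ∑ θ : Cfg n, (Wr θ - (n:ℝ)/2)^2 = (n:ℝ) * (2:ℝ)^n / 4 := by
  have expand : ∀ θ : Cfg n, (Wr θ - (n:ℝ)/2)^2
      = Wr θ ^ 2 - (n:ℝ) * Wr θ + ((n:ℝ)^2/4) * 1 := fun θ => by ring
  rw [Finset.sum_congr rfl fun θ _ => expand θ]
  rw [Finset.sum_add_distrib, Finset.sum_sub_distrib, ← Finset.mul_sum, ← Finset.mul_sum]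
  rw [sum_Wr_cfg hn, sum_Wr_sq_cfg hn, sum_one_cfg]
  ring

lemma cheby_low {α : Type*} [Fintype α] [DecidableEq α] (p W : α → ℝ) (A : Finset α)
    (hp : ∀ x, 0 ≤ p x) (h1 : ∑ x : α, p x = 1) {a v t : ℝ}
    (hv : ∑ x : α, p x * (W x - a)^2 ≤ v) (ht : t < a)
    (hA : ∀ x, x ∉ A → W x < t) :
    1 - v / (a - t)^2 ≤ ∑ x ∈ A, p x := by
  have hcompl : (∑ x ∈ Aᶜ, p x) * (a - t)^2 ≤ v := by
    rw [Finset.sum_mul]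
    calc ∑ x ∈ Aᶜ, p x * (a-t)^2
        ≤ ∑ x ∈ Aᶜ, p x * (W x - a)^2 := by
          refine Finset.sum_le_sum fun x hx => ?_
          have hw := hA x (Finset.mem_compl.1 hx)
          have hsq : (a - t)^2 ≤ (W x - a)^2 := by nlinarith
          exact mul_le_mul_of_nonneg_left hsq (hp x)
      _ ≤ ∑ x : α, p x * (W x - a)^2 :=
          Finset.sum_le_sum_of_subset_of_nonneg (Finset.subset_univ _)
            (fun x _ _ => mul_nonneg (hp x) (sq_nonneg _))
      _ ≤ v := hv
  have hpos : (0:ℝ) < (a - t)^2 := by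
    have : (0:ℝ) < a - t := by linarith
    positivity
  have h2 : ∑ x ∈ Aᶜ, p x ≤ v / (a-t)^2 := by
    rw [le_div_iff₀ hpos]
    exact hcompl
  have hsplit := Finset.sum_add_sum_compl A p
  rw [h1] at hsplit
  linarith

lemma cheby_up {α : Type*} [Fintype α] [DecidableEq α] (p W : α → ℝ) (A : Finset α)
    (hp : ∀ x, 0 ≤ p x) {a v t : ℝ}
    (hv : ∑ x : α, p x * (W x - a)^2 ≤ v) (ht : a < t)
    (hA : ∀ x ∈ A, t ≤ W x) :
    ∑ x ∈ A, p x ≤ v / (t - a)^2 := by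
  have hsum : (∑ x ∈ A, p x) * (t - a)^2 ≤ v := by
    rw [Finset.sum_mul]
    calc ∑ x ∈ A, p x * (t-a)^2
        ≤ ∑ x ∈ A, p x * (W x - a)^2 := by
          refine Finset.sum_le_sum fun x hx => ?_
          have hw := hA x hx
          have hsq : (t - a)^2 ≤ (W x - a)^2 := by nlinarith
          exact mul_le_mul_of_nonneg_left hsq (hp x)
      _ ≤ ∑ x : α, p x * (W x - a)^2 :=
          Finset.sum_le_sum_of_subset_of_nonneg (Finset.subset_univ _)
            (fun x _ _ => mul_nonneg (hp x) (sq_nonneg _))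
      _ ≤ v := hv
  have hpos : (0:ℝ) < (t - a)^2 := by
    have : (0:ℝ) < t - a := by linarith
    positivity
  rw [← le_div_iff₀ hpos] at hsum
  exact hsum

lemma tv_low {α : Type*} [Fintype α] [DecidableEq α] (p g : α → ℝ) (A : Finset α)
    (hp : ∑ x : α, p x = 1) (hg : ∑ x : α, g x = 1) :
    2 * ((∑ x ∈ A, p x) - ∑ x ∈ A, g x) ≤ ∑ x : α, |p x - g x| := by
  have h1 : ∑ x ∈ A, (p x - g x) ≤ ∑ x ∈ A, |p x - g x| :=
    Finset.sum_le_sum fun x _ => le_abs_self _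
  have h2 : ∑ x ∈ Aᶜ, (g x - p x) ≤ ∑ x ∈ Aᶜ, |p x - g x| :=
    Finset.sum_le_sum fun x _ => by rw [abs_sub_comm]; exact le_abs_self _
  have hs1 := Finset.sum_add_sum_compl A p
  have hs2 := Finset.sum_add_sum_compl A g
  have hs3 := Finset.sum_add_sum_compl A (fun x => |p x - g x|)
  rw [hp] at hs1
  rw [hg] at hs2
  rw [Finset.sum_sub_distrib] at h1 h2
  linarith

lemma iter_nonneg {n : ℕ} (x₀ : Fin n) : ∀ (k : ℕ) (q : St n), 0 ≤ (Tre n)^[k] (dl n x₀) q := by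
  intro k
  induction k with
  | zero => exact dl_nonneg x₀
  | succ m ih => rw [Function.iterate_succ_apply']; exact Tre_nonneg _ ih

lemma iter_mass {n : ℕ} (hn : 2 ≤ n) (x₀ : Fin n) :
    ∀ k : ℕ, ∑ q : St n, (Tre n)^[k] (dl n x₀) q = 1 := by
  intro k
  induction k with
  | zero =>
      simp only [Function.iterate_zero, id]
      have h := sum_dl_mul x₀ (fun _ => (1:ℝ))
      simp only [mul_one] at h
      exact h
  | succ m ih => rw [Function.iterate_succ_apply', L0_step hn, ih]

end CGLL

open CGLL

lemma aux_sqrt_le {x ν : ℝ} (hsq : x^2 = ν) (hge : 1000 ≤ x) : x ≤ ν/1000 := by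
  nlinarith

lemma aux_expk {νm2 lg kk X : ℝ} (h2 : 0 < νm2) (hk0 : 0 ≤ kk)
    (hlg : -(1/νm2) ≤ lg) (hkb : kk ≤ X/2) : -X/νm2 ≤ 2*(kk*lg) := by
  rw [div_le_iff₀ h2]
  have hν : νm2 ≠ 0 := ne_of_gt h2
  have hlg2 : (-1:ℝ) ≤ lg * νm2 := by
    have h := mul_le_mul_of_nonneg_right hlg (le_of_lt h2)
    have he : -(1/νm2)*νm2 = -1 := by field_simp
    linarith
  nlinarith [mul_le_mul_of_nonneg_left hlg2 (by linarith : (0:ℝ) ≤ 2*kk), hkb]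

lemma aux_key {ν u E : ℝ} (hν : (1000000:ℝ) ≤ ν) (hE : 0 < E)
    (hu2 : (ν-1)^2*((E/ν)*(99/100)) ≤ u^2) : 425*ν*E ≤ 720*u^2 := by
  have hν0 : (0:ℝ) < ν := by linarith
  have h1 : 425*ν^2 ≤ 720*(99/100)*(ν-1)^2 := by
    nlinarith [mul_le_mul_of_nonneg_right hν (le_of_lt hν0)]
  have h2 : (ν-1)^2 * ((E/ν)*(99/100)) * ν = (ν-1)^2 * E * (99/100) := by
    field_simp
  have hA3 := mul_le_mul_of_nonneg_right hu2 (le_of_lt hν0)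
  rw [h2] at hA3
  have hB3 := mul_le_mul_of_nonneg_right h1 (le_of_lt hE)
  have h3 : 425*ν^2*E ≤ 720*(u^2*ν) := by nlinarith [hA3, hB3]
  have h4 : (425*ν*E) * ν ≤ (720*u^2) * ν := by linarith
  exact le_of_mul_le_mul_right h4 hν0

lemma aux_final {ν u E : ℝ} (hu : 0 < u) (hE : 0 < E)
    (hkey : 425*ν*E ≤ 720*u^2) : (425/36)*(ν/u^2) ≤ 20*E⁻¹ := by
  have hu2 : (0:ℝ) < u^2 := pow_pos hu 2
  rw [show (425/36:ℝ)*(ν/u^2) = (425*ν)/(36*u^2) from by ring,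
    show (20:ℝ)*E⁻¹ = 20/E from by rw [inv_eq_one_div]; ring,
    div_le_div_iff₀ (by linarith) hE]
  linarith

set_option maxHeartbeats 1000000 in
/-- lower bound / cut-off. There is `n₀` such that for every `n ≥ n₀`,
every starting vertex `x₀`, every `0 < c < log n` and every integer
`0 ≤ k ≤ (n/2)(log n − c)`, the distribution `p^{(k)} = 𝓜_X^k(δ_{0_X}⊗δ_{x₀})` of the
walk started with all lamps off satisfies `‖p^{(k)} − π‖_TV ≥ 1 − 20·e^{−c}`, where `π`
is the uniform distribution. -/
theorem complete_graph_lamplighter_cutoff_lower :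
    ∃ n₀ : ℕ, ∀ n : ℕ, n₀ ≤ n →
      ∀ (x₀ : Fin n) (c : ℝ), 0 < c → c < Real.log n →
        ∀ k : ℕ, (k : ℝ) ≤ ((n : ℝ) / 2) * (Real.log n - c) →
          1 - 20 * Real.exp (-c)
            ≤ (1 / 2 : ℝ) * ∑ p : (Fin n → ZMod 2) × Fin n,
                ‖((knLampM n)^[k]
                    (fun q => if q = ((0 : Fin n → ZMod 2), x₀) then 1 else 0)) p
                  - (1 / ((2 : ℂ) ^ n * n))‖ := by
  use 1000000
  intro n hn x₀ c hc hclog k hk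
  have hn6 : 6 ≤ n := by omega
  have hn2 : 2 ≤ n := by omega
  have hn1 : 1 ≤ n := by omega
  have hν6 : (6:ℝ) ≤ (n:ℝ) := by exact_mod_cast hn6
  have hνM : (1000000:ℝ) ≤ (n:ℝ) := by exact_mod_cast hn
  have hν0 : (0:ℝ) < (n:ℝ) := by linarith
  -- reduce to the real operator
  have hdl : (fun q : St n => if q = ((0 : Fin n → ZMod 2), x₀) then (1:ℂ) else 0)
      = fun q : St n => ((dl n x₀ q : ℝ) : ℂ) := by
    funext q
    unfold dl
    split_ifs <;> simp
  have hiter : ((knLampM n)^[k]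
      (fun q : St n => if q = ((0 : Fin n → ZMod 2), x₀) then (1:ℂ) else 0))
      = fun q : St n => (((Tre n)^[k] (dl n x₀) q : ℝ) : ℂ) := by
    rw [hdl]
    exact iter_ofReal (dl n x₀) k
  have hπc : ∀ r : ℝ, ‖((r : ℝ) : ℂ) - 1/((2:ℂ)^n * n)‖ = |r - 1/((2:ℝ)^n * (n:ℝ))| := by
    intro r
    have hcast : (((1:ℝ)/((2:ℝ)^n * (n:ℝ)) : ℝ) : ℂ) = 1/((2:ℂ)^n * n) := by push_cast; ring
    rw [← hcast, ← Complex.ofReal_sub, Complex.norm_real, Real.norm_eq_abs]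
  simp only [hiter]
  rw [Finset.sum_congr rfl fun q _ => hπc ((Tre n)^[k] (dl n x₀) q)]
  -- now a purely real statement
  set ν : ℝ := (n:ℝ) with hνdef
  set gv : ℝ := 1/((2:ℝ)^n * ν) with hgvdef
  set P : St n → ℝ := (Tre n)^[k] (dl n x₀) with hPdef
  set u : ℝ := (ν - 1) * lam n ^ k with hudef
  set tth : ℝ := ν/2 + u/5 with htdef
  set A : Finset (St n) := univ.filter (fun q : St n => tth ≤ Wr q.1) with hAdef
  -- basic p facts
  have hp0 : ∀ q, 0 ≤ P q := fun q => iter_nonneg x₀ k q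
  have hp1 : ∑ q : St n, P q = 1 := iter_mass hn2 x₀ k
  -- lam facts
  have hlamdef : lam n = (ν - 2)/(ν - 1) := rfl
  have hlampos : 0 < lam n := by rw [hlamdef]; apply div_pos <;> linarith
  have hupos : 0 < u := by
    rw [hudef]
    exact mul_pos (by linarith) (pow_pos hlampos k)
  -- variance bound for P around center ν/2 + u/2
  have hvar : ∑ q : St n, P q * (Wr q.1 - (ν/2 + u/2))^2 ≤ ν/2 := by
    rcases Nat.eq_zero_or_pos k with hk0 | hk1
    · have hu0 : u = ν - 1 := by rw [hudef, hk0, pow_zero, mul_one]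
      have hP0 : P = dl n x₀ := by rw [hPdef, hk0, Function.iterate_zero, id]
      rw [hP0, sum_dl_mul x₀ (fun q => (Wr q.1 - (ν/2 + u/2))^2)]
      show (Wr (0 : Cfg n) - (ν/2 + u/2))^2 ≤ ν/2
      rw [Wr_zero, hu0]
      have : ((n:ℝ) - (ν/2 + (ν-1)/2))^2 = 1/4 := by rw [hνdef]; ring
      rw [hνdef] at this ⊢
      linarith only [this, hν6]
    · obtain ⟨_, h1, _, hW, _, hWW⟩ := invariants hn6 x₀ k hk1
      rw [← hPdef] at h1 hW hWW
      have haA : ν/2 + u/2 = Ak n k := by rw [hudef]; unfold Ak; rw [hνdef]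
      rw [haA]
      have expand : ∀ q : St n, P q * (Wr q.1 - Ak n k)^2
          = P q * Wr q.1^2 - 2*(Ak n k)*(P q * Wr q.1) + (Ak n k)^2 * P q :=
        fun q => by ring
      rw [Finset.sum_congr rfl fun q _ => expand q, Finset.sum_add_distrib,
        Finset.sum_sub_distrib, ← Finset.mul_sum, ← Finset.mul_sum, hW, h1]
      linarith only [hWW]
  -- uniform distribution facts
  have h2n0 : (0:ℝ) < (2:ℝ)^n := by positivity
  have hgv0 : 0 < gv := by rw [hgvdef]; positivity
  have hcard : (Fintype.card (St n) : ℝ) = (2:ℝ)^n * ν := by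
    rw [Fintype.card_prod, Fintype.card_fun, ZMod.card, Fintype.card_fin]
    push_cast
    rw [hνdef]
  have hg1 : ∑ _q : St n, gv = 1 := by
    rw [Finset.sum_const, Finset.card_univ, nsmul_eq_mul, hcard, hgvdef]
    field_simp
  have hgvar : ∑ q : St n, gv * (Wr q.1 - ν/2)^2 = ν/4 := by
    rw [← Finset.mul_sum]
    have hsum : ∑ q : St n, (Wr q.1 - ν/2)^2 = ν * (ν * (2:ℝ)^n/4) := by
      rw [Fintype.sum_prod_type]
      have inner : ∀ θ : Cfg n, ∑ _x : Fin n, (Wr θ - ν/2)^2 = ν * (Wr θ - ν/2)^2 := by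
        intro θ
        rw [Finset.sum_const, Finset.card_univ, Fintype.card_fin, nsmul_eq_mul, hνdef]
      rw [Finset.sum_congr rfl fun θ _ => inner θ, ← Finset.mul_sum, hνdef,
        pi_var_cfg hn1]
    rw [hsum, hgvdef]
    field_simp
  -- Chebyshev on both sides
  have htlt : tth < ν/2 + u/2 := by rw [htdef]; linarith only [hupos]
  have hAout : ∀ q : St n, q ∉ A → Wr q.1 < tth := by
    intro q hq
    rcases lt_or_ge (Wr q.1) tth with h | h
    · exact h
    · exact absurd (Finset.mem_filter.2 ⟨Finset.mem_univ q, h⟩) hq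
  have hAin : ∀ q ∈ A, tth ≤ Wr q.1 := fun q hq => (Finset.mem_filter.1 hq).2
  have hcheb1 := cheby_low P (fun q => Wr q.1) A hp0 hp1 hvar htlt hAout
  have hνtth : ν/2 < tth := by rw [htdef]; linarith only [hupos]
  have hcheb2 := cheby_up (fun _ : St n => gv) (fun q => Wr q.1) A
    (fun _ => le_of_lt hgv0) (le_of_eq hgvar) hνtth hAin
  have htv := tv_low P (fun _ : St n => gv) A hp1 hg1
  -- rewrite the Chebyshev error terms
  have hu2pos : (0:ℝ) < u^2 := pow_pos hupos 2
  have e1 : (ν/2)/((ν/2 + u/2) - tth)^2 = (50/9)*(ν/u^2) := by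
    rw [htdef]
    have : (ν/2 + u/2) - (ν/2 + u/5) = 3*u/10 := by ring
    rw [this]
    field_simp
    ring
  have e2 : (ν/4)/(tth - ν/2)^2 = (25/4)*(ν/u^2) := by
    rw [htdef]
    have : (ν/2 + u/5) - ν/2 = u/5 := by ring
    rw [this]
    field_simp
    ring
  rw [e1] at hcheb1
  rw [e2] at hcheb2
  -- lower bound on u², via logarithm estimates
  have hν2pos : (0:ℝ) < ν - 2 := by linarith
  have hL0 : 0 ≤ Real.log ν := Real.log_nonneg (by linarith)
  have hsqpos : (0:ℝ) < Real.sqrt ν := Real.sqrt_pos.2 hν0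
  have hsq : Real.sqrt ν ^ 2 = ν := Real.sq_sqrt (le_of_lt hν0)
  have hlogsqrt : Real.log ν = 2 * Real.log (Real.sqrt ν) := by
    conv_lhs => rw [← hsq]
    rw [Real.log_pow]
    push_cast
    ring
  have hlogle : Real.log ν ≤ 2 * Real.sqrt ν := by
    have h := Real.log_le_sub_one_of_pos hsqpos
    linarith only [hlogsqrt, h]
  have hsqrt_ge : (1000:ℝ) ≤ Real.sqrt ν :=
    (Real.le_sqrt (by norm_num) (le_of_lt hν0)).mpr (by norm_num; linarith only [hνM])
  have hsqrt_le : Real.sqrt ν ≤ ν/1000 := aux_sqrt_le hsq hsqrt_ge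
  have h200 : 200 * Real.log ν ≤ ν - 2 := by linarith only [hlogle, hsqrt_le, hνM]
  have h2L : 2*(Real.log ν)/(ν-2) ≤ 1/100 := by
    rw [div_le_div_iff₀ hν2pos (by norm_num : (0:ℝ) < 100)]
    linarith only [h200, hL0]
  -- log lam ≥ -1/(ν-2)
  have hloglam : -(1/(ν-2)) ≤ Real.log (lam n) := by
    have hinv : (lam n)⁻¹ = (ν-1)/(ν-2) := by rw [hlamdef, inv_div]
    have hlog1 : Real.log ((lam n)⁻¹) ≤ (ν-1)/(ν-2) - 1 := by
      rw [hinv]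
      exact Real.log_le_sub_one_of_pos (by apply div_pos <;> linarith)
    have heq : (ν-1)/(ν-2) - 1 = 1/(ν-2) := by
      rw [div_sub_one (by linarith : ν - 2 ≠ 0)]
      norm_num
    rw [Real.log_inv, heq] at hlog1
    linarith only [hlog1]
  -- (lam^k)² ≥ exp(-ν(L-c)/(ν-2))
  have hexpk : Real.exp (-(ν*(Real.log ν - c))/(ν-2)) ≤ (lam n ^ k)^2 := by
    have hlamexp : lam n ^ k = Real.exp ((k:ℝ) * Real.log (lam n)) := by
      rw [← Real.log_pow, Real.exp_log (pow_pos hlampos k)]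
    have hsq2 : (lam n ^ k)^2 = Real.exp (2*((k:ℝ) * Real.log (lam n))) := by
      rw [hlamexp, sq, ← Real.exp_add]
      congr 1
      ring
    rw [hsq2]
    apply Real.exp_le_exp.mpr
    exact aux_expk hν2pos (Nat.cast_nonneg k) hloglam (by linarith only [hk])
  -- split the exponential
  have hsplitexp : Real.exp (-(ν*(Real.log ν - c))/(ν-2))
      = (Real.exp c / ν) * Real.exp (-(2*(Real.log ν - c))/(ν-2)) := by
    have e : -(ν*(Real.log ν - c))/(ν-2)
        = (c - Real.log ν) + (-(2*(Real.log ν - c))/(ν-2)) := by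
      field_simp
      ring
    rw [e, Real.exp_add, Real.exp_sub, Real.exp_log hν0]
  have hlast : (99/100:ℝ) ≤ Real.exp (-(2*(Real.log ν - c))/(ν-2)) := by
    have eA : -(2*(Real.log ν - c))/(ν-2) = -(2*Real.log ν/(ν-2)) + 2*c/(ν-2) := by
      field_simp
      ring
    have hcd : 0 ≤ 2*c/(ν-2) := by positivity
    have hxge : -(1/100:ℝ) ≤ -(2*(Real.log ν - c))/(ν-2) := by
      rw [eA]
      linarith only [hcd, h2L]
    have hexpge := Real.add_one_le_exp (-(2*(Real.log ν - c))/(ν-2))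
    linarith only [hxge, hexpge]
  have h99 : (Real.exp c/ν) * (99/100) ≤ (lam n ^ k)^2 := by
    calc (Real.exp c/ν) * (99/100)
        ≤ (Real.exp c/ν) * Real.exp (-(2*(Real.log ν - c))/(ν-2)) :=
          mul_le_mul_of_nonneg_left hlast (by positivity)
      _ = Real.exp (-(ν*(Real.log ν - c))/(ν-2)) := hsplitexp.symm
      _ ≤ (lam n ^ k)^2 := hexpk
  have hu2 : (ν-1)^2 * ((Real.exp c/ν) * (99/100)) ≤ u^2 := by
    have h : u^2 = (ν-1)^2 * (lam n ^ k)^2 := by rw [hudef]; ring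
    rw [h]
    exact mul_le_mul_of_nonneg_left h99 (sq_nonneg _)
  have hkey : 425*ν*Real.exp c ≤ 720*u^2 :=
    aux_key hνM (Real.exp_pos c) hu2
  have hfinal : (425/36)*(ν/u^2) ≤ 20*Real.exp (-c) := by
    rw [Real.exp_neg]
    exact aux_final hupos (Real.exp_pos c) hkey
  -- conclusion
  beta_reduce at htv hcheb2
  linarith only [hcheb1, hcheb2, htv, hfinal]
end
end
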